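/- arXiv:1810.12486 — 6 statements merged into one kernel-verified Lean document; each statement's English description precedes it below -/
import Mathlib

section
/- Let q > 0 and let M be the Neumann–Poincaré operator of the crescent domain realized in frequency variables on H. Then the spectrum of M (as a bounded ℂ-linear operator on H) equals the real interval [-1/2, 1/2] ⊂ ℂ, and M has no eigenvalues: for every λ ∈ ℂ and f ∈ H, if M f = λ f then f = 0. -/
/-!
`M` is the direct sum of the multiplication operators by the real functions
`m₁ = -½e^{-q|k|}` on `L²(μ₁)` and `m₂ = ½e^{-q|k|}` on `L²(μ₂)`, so its spectrum is the union
of theirs. The spectrum of multiplication by a bounded `g` lies in the closure of the range of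
`g`: off it, multiplication by `(λ - g)⁻¹` is bounded and inverts `λ - g`. Conversely, if `g`
stays `ε`-close to `λ` on a set of positive finite measure, the indicator of that set is an
`ε`-approximate eigenvector, so `λ` is in the spectrum. On `k > 0` the densities are continuous
and positive and `m₁`, `m₂` sweep out `(-½, 0)` and `(0, ½)`, which gives `[-½, ½]`.
An eigenvector of a multiplication operator is supported on a level set of the multiplier, and
the level sets of `e^{-q|k|}` have at most two points.
-/

open MeasureTheory Set

noncomputable section

/-- `w₁(k) = (1 - e^{-q|k|})/(2|k|)`. -/
def w1 (q k : ℝ) : ℝ := (1 - Real.exp (-(q * |k|))) / (2 * |k|)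

/-- `w₂(k) = (1 + e^{-q|k|})/(2|k|)`. -/
def w2 (q k : ℝ) : ℝ := (1 + Real.exp (-(q * |k|))) / (2 * |k|)

/-- The measure `μ₁` with density `w₁` w.r.t. Lebesgue measure. -/
def mu1 (q : ℝ) : Measure ℝ := volume.withDensity fun k => ENNReal.ofReal (w1 q k)

/-- The measure `μ₂` with density `w₂` w.r.t. Lebesgue measure. -/
def mu2 (q : ℝ) : Measure ℝ := volume.withDensity fun k => ENNReal.ofReal (w2 q k)

/-- First multiplier of the NP operator of the crescent domain: `-(1/2)e^{-q|k|}`. -/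
def m1 (q k : ℝ) : ℝ := -(1/2) * Real.exp (-(q * |k|))

/-- Second multiplier of the NP operator of the crescent domain: `(1/2)e^{-q|k|}`. -/
def m2 (q k : ℝ) : ℝ := (1/2) * Real.exp (-(q * |k|))

/-- The Hilbert space `H = L²(μ₁;ℂ) × L²(μ₂;ℂ)` with the `L²` product inner product. -/
abbrev Hsp (q : ℝ) := WithLp 2 (Lp ℂ 2 (mu1 q) × Lp ℂ 2 (mu2 q))

open scoped ENNReal

section ApproximateEigenvalue
variable {𝕜 E : Type*} [NontriviallyNormedField 𝕜] [NormedAddCommGroup E] [NormedSpace 𝕜 E]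

theorem mem_spectrum_of_forall_exists_norm_sub_le (T : E →L[𝕜] E) (c : 𝕜)
    (h : ∀ ε > 0, ∃ x, x ≠ 0 ∧ ‖c • x - T x‖ ≤ ε * ‖x‖) : c ∈ spectrum 𝕜 T := by
  rintro ⟨u, hu⟩
  set B := (↑u⁻¹ : E →L[𝕜] E)
  set ε := (2 * (‖B‖ + 1))⁻¹
  have hBε : ‖B‖ * ε ≤ 1 / 2 := by
    rw [← div_eq_mul_inv, div_le_div_iff₀ (by positivity) two_pos]
    linarith
  obtain ⟨x, hx, hTx⟩ := h ε (by positivity)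
  have hBx : B (c • x - T x) = x := by
    have : c • x - T x = (u : E →L[𝕜] E) x := by simp [hu, Algebra.algebraMap_eq_smul_one]
    rw [this, ← mul_apply_eq_comp, u.inv_mul, one_apply_eq_self]
  have hle : ‖x‖ ≤ ‖B‖ * ε * ‖x‖ :=
    calc ‖x‖ = ‖B (c • x - T x)‖ := by rw [hBx]
      _ ≤ ‖B‖ * (ε * ‖x‖) := B.le_opNorm_of_le hTx
      _ = ‖B‖ * ε * ‖x‖ := by ring
  nlinarith [norm_pos_iff.2 hx]

end ApproximateEigenvalue

namespace ContinuousLinearMap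

variable {𝕜 E F : Type*} [NontriviallyNormedField 𝕜] [NormedAddCommGroup E] [NormedSpace 𝕜 E]
  [NormedAddCommGroup F] [NormedSpace 𝕜 F]

theorem isUnit_prodMap_iff {A : E →L[𝕜] E} {B : F →L[𝕜] F} :
    IsUnit (A.prodMap B) ↔ IsUnit A ∧ IsUnit B := by
  constructor
  · intro hAB
    obtain ⟨R, hright, hleft⟩ := isUnit_iff_exists.1 hAB
    have hr := fun z => DFunLike.congr_fun hright z
    have hl := fun z => DFunLike.congr_fun hleft z
    simp only [mul_apply_eq_comp, one_apply_eq_self] at hr hl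
    refine ⟨isUnit_iff_exists.2 ⟨fst 𝕜 E F ∘L R ∘L inl 𝕜 E F, ?_, ?_⟩,
      isUnit_iff_exists.2 ⟨snd 𝕜 E F ∘L R ∘L inr 𝕜 E F, ?_, ?_⟩⟩ <;> ext x
    · simpa using congrArg Prod.fst (hr (x, 0))
    · simpa using congrArg Prod.fst (hl (x, 0))
    · simpa using congrArg Prod.snd (hr (0, x))
    · simpa using congrArg Prod.snd (hl (0, x))
  · rintro ⟨⟨A, rfl⟩, ⟨B, rfl⟩⟩
    refine isUnit_iff_exists.2 ⟨(↑A⁻¹ : E →L[𝕜] E).prodMap ↑B⁻¹, ?_, ?_⟩ <;> ext x <;>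
      simp [← mul_apply_eq_comp]

theorem spectrum_prodMap (A : E →L[𝕜] E) (B : F →L[𝕜] F) :
    spectrum 𝕜 (A.prodMap B) = spectrum 𝕜 A ∪ spectrum 𝕜 B := by
  ext c
  have : algebraMap 𝕜 _ c - A.prodMap B =
      (algebraMap 𝕜 _ c - A).prodMap (algebraMap 𝕜 _ c - B) := by
    ext x <;> simp [Algebra.algebraMap_eq_smul_one]
  simp only [spectrum.mem_iff, Set.mem_union, this, isUnit_prodMap_iff, not_and_or]

variable (p : ℝ≥0∞) [Fact (1 ≤ p)]

def withLpProdMap (A : E →L[𝕜] E) (B : F →L[𝕜] F) :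
    WithLp p (E × F) →L[𝕜] WithLp p (E × F) :=
  (WithLp.prodContinuousLinearEquiv p 𝕜 E F).symm.conjContinuousAlgEquiv (A.prodMap B)

variable {p}

@[simp]
theorem withLpProdMap_fst (A : E →L[𝕜] E) (B : F →L[𝕜] F) (x : WithLp p (E × F)) :
    (A.withLpProdMap p B x).fst = A x.fst := rfl

@[simp]
theorem withLpProdMap_snd (A : E →L[𝕜] E) (B : F →L[𝕜] F) (x : WithLp p (E × F)) :
    (A.withLpProdMap p B x).snd = B x.snd := rfl

theorem spectrum_withLpProdMap (A : E →L[𝕜] E) (B : F →L[𝕜] F) :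
    spectrum 𝕜 (A.withLpProdMap p B) = spectrum 𝕜 A ∪ spectrum 𝕜 B := by
  rw [withLpProdMap, AlgEquiv.spectrum_eq, spectrum_prodMap]

end ContinuousLinearMap

namespace MeasureTheory

theorem indicatorConstLp_ne_zero {α E : Type*} {m : MeasurableSpace α} {μ : Measure α}
    [NormedAddCommGroup E] {p : ℝ≥0∞} {s : Set α} (hs : MeasurableSet s) (hμs : μ s ≠ ∞)
    (hμs₀ : μ s ≠ 0) {c : E} (hc : c ≠ 0) : indicatorConstLp p hs hμs c ≠ 0 := by
  intro h
  have hae : s.indicator (fun _ => c) =ᵐ[μ] 0 :=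
    (indicatorConstLp_coeFn (hs := hs) (hμs := hμs)).symm.trans (h ▸ Lp.coeFn_zero E p μ)
  rw [indicator_ae_eq_zero, Function.support_const hc, inter_univ] at hae
  exact hμs₀ hae

theorem memLp_top_ofReal {α : Type*} {m : MeasurableSpace α} {φ : α → ℝ} (hφ : Measurable φ)
    {C : ℝ} (hC : ∀ x, |φ x| ≤ C) (μ : Measure α) : MemLp (fun x => (φ x : ℂ)) ∞ μ :=
  memLp_top_of_bound (by fun_prop) C (.of_forall fun x => by simpa using hC x)

namespace Lp

variable {α : Type*} {m : MeasurableSpace α} {μ : Measure α} {p : ℝ≥0∞} [Fact (1 ≤ p)]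
  {g h : α → ℂ}

variable (μ p) in
def mulOp (g : α → ℂ) (hg : MemLp g ∞ μ) : Lp ℂ p μ →L[ℂ] Lp ℂ p μ :=
  (ContinuousLinearMap.mul ℂ ℂ).holderL μ ∞ p p (hg.toLp g)

theorem mulOp_ae_eq (hg : MemLp g ∞ μ) (f : Lp ℂ p μ) :
    mulOp μ p g hg f =ᵐ[μ] fun x => g x * f x := by
  filter_upwards [ContinuousLinearMap.coeFn_holder (r := p) (ContinuousLinearMap.mul ℂ ℂ)
    (hg.toLp g) f, hg.coeFn_toLp] with x h₁ h₂
  simp [mulOp, h₁, h₂]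

theorem mulOp_mul (hg : MemLp g ∞ μ) (hh : MemLp h ∞ μ) :
    mulOp μ p (fun x => g x * h x) (hh.mul' hg) = mulOp μ p g hg * mulOp μ p h hh := by
  ext1 f
  refine Lp.ext ?_
  filter_upwards [mulOp_ae_eq (hh.mul' hg) f, mulOp_ae_eq hg (mulOp μ p h hh f),
    mulOp_ae_eq hh f] with x h₁ h₂ h₃
  rw [mul_apply_eq_comp, h₁, h₂, h₃, mul_assoc]

theorem mulOp_eq_algebraMap {c : ℂ} (hg : MemLp g ∞ μ) (hgc : ∀ᵐ x ∂μ, g x = c) :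
    mulOp μ p g hg = algebraMap ℂ _ c := by
  ext1 f
  refine Lp.ext ?_
  filter_upwards [mulOp_ae_eq hg f, Lp.coeFn_smul c f, hgc] with x h₁ h₂ h₃
  rw [h₁, Algebra.algebraMap_eq_smul_one, smul_apply, one_apply_eq_self, h₂, Pi.smul_apply,
    smul_eq_mul, h₃]

theorem algebraMap_sub_mulOp (c : ℂ) (hg : MemLp g ∞ μ) (hcg : MemLp (fun x => c - g x) ∞ μ) :
    algebraMap ℂ _ c - mulOp μ p g hg = mulOp μ p (fun x => c - g x) hcg := by
  ext1 f
  refine Lp.ext ?_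
  filter_upwards [mulOp_ae_eq hcg f, mulOp_ae_eq hg f, Lp.coeFn_smul c f,
    Lp.coeFn_sub (c • f) (mulOp μ p g hg f)] with x h₁ h₂ h₃ h₄
  rw [h₁, Algebra.algebraMap_eq_smul_one, sub_apply, smul_apply, one_apply_eq_self, h₄,
    Pi.sub_apply, h₃, h₂, Pi.smul_apply, smul_eq_mul, sub_mul]

theorem isUnit_mulOp {δ : ℝ} (hδ : 0 < δ) (hg : MemLp g ∞ μ) (hgδ : ∀ x, δ ≤ ‖g x‖) :
    IsUnit (mulOp μ p g hg) := by
  have hinv : MemLp (fun x => (g x)⁻¹) ∞ μ :=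
    memLp_top_of_bound hg.1.aemeasurable.inv.aestronglyMeasurable δ⁻¹ (.of_forall fun x => by
      rw [norm_inv]; exact inv_anti₀ hδ (hgδ x))
  have hne : ∀ x, g x ≠ 0 := fun x => norm_pos_iff.1 (hδ.trans_le (hgδ x))
  refine isUnit_iff_exists.2 ⟨mulOp μ p _ hinv, ?_, ?_⟩
  · rw [← mulOp_mul, mulOp_eq_algebraMap _ (.of_forall fun x => mul_inv_cancel₀ (hne x)), map_one]
  · rw [← mulOp_mul, mulOp_eq_algebraMap _ (.of_forall fun x => inv_mul_cancel₀ (hne x)), map_one]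

theorem spectrum_mulOp_subset {S : Set ℂ} (hS : IsClosed S) (hg : MemLp g ∞ μ)
    (hgS : ∀ x, g x ∈ S) : spectrum ℂ (mulOp μ p g hg) ⊆ S := by
  intro c hc
  by_contra hcS
  obtain ⟨δ, hδ, hball⟩ := Metric.isOpen_iff.1 hS.isOpen_compl c hcS
  have hcg : MemLp (fun x => c - g x) ∞ μ := (memLp_top_const c).sub hg
  refine spectrum.mem_iff.1 hc ?_
  rw [algebraMap_sub_mulOp c hg hcg]
  refine isUnit_mulOp hδ hcg fun x => ?_
  by_contra! hx
  exact hball (by rwa [Metric.mem_ball, _root_.dist_eq_norm, norm_sub_rev]) (hgS x)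

theorem eq_zero_of_mulOp_eq_smul {c : ℂ} (hg : MemLp g ∞ μ) (hc : μ {x | g x = c} = 0)
    {f : Lp ℂ p μ} (hf : mulOp μ p g hg f = c • f) : f = 0 := by
  have hne : ∀ᵐ x ∂μ, g x ≠ c := measure_eq_zero_iff_ae_notMem.1 hc
  refine Lp.ext ?_
  filter_upwards [mulOp_ae_eq hg f, Lp.coeFn_smul c f, Lp.coeFn_zero ℂ p μ, hne]
    with x h₁ h₂ h₃ h₄
  rw [hf, h₂, Pi.smul_apply, smul_eq_mul] at h₁
  rw [h₃, Pi.zero_apply]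
  have : (g x - c) * f x = 0 := by linear_combination -h₁
  exact (mul_eq_zero.1 this).resolve_left (sub_ne_zero.2 h₄)

theorem norm_mulOp_indicatorConstLp_le {s : Set α} (hs : MeasurableSet s) (hμs : μ s ≠ ∞)
    {ε : ℝ} (hg : MemLp g ∞ μ) (hgs : ∀ x ∈ s, ‖g x‖ ≤ ε) :
    ‖mulOp μ p g hg (indicatorConstLp p hs hμs 1)‖ ≤ ε * ‖indicatorConstLp p hs hμs (1 : ℂ)‖ := by
  refine Lp.norm_le_mul_norm_of_ae_le_mul ?_
  filter_upwards [mulOp_ae_eq hg (indicatorConstLp p hs hμs (1 : ℂ)),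
    indicatorConstLp_coeFn (c := (1 : ℂ))] with x h₁ h₂
  rw [h₁, h₂, norm_mul]
  by_cases hx : x ∈ s
  · simpa [hx] using hgs x hx
  · simp [hx]

theorem mem_spectrum_mulOp {c : ℂ} (hg : MemLp g ∞ μ)
    (hnear : ∀ ε > 0, ∃ s, MeasurableSet s ∧ μ s ≠ 0 ∧ μ s ≠ ∞ ∧ ∀ x ∈ s, ‖c - g x‖ ≤ ε) :
    c ∈ spectrum ℂ (mulOp μ p g hg) := by
  refine mem_spectrum_of_forall_exists_norm_sub_le _ c fun ε hε => ?_
  obtain ⟨s, hs, hμs₀, hμs, hgs⟩ := hnear ε hε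
  have hcg : MemLp (fun x => c - g x) ∞ μ := (memLp_top_const c).sub hg
  refine ⟨indicatorConstLp p hs hμs 1, indicatorConstLp_ne_zero hs hμs hμs₀ one_ne_zero, ?_⟩
  have hsub := congrArg (fun T => T (indicatorConstLp p hs hμs (1 : ℂ)))
    (algebraMap_sub_mulOp (p := p) c hg hcg)
  simp only [Algebra.algebraMap_eq_smul_one, sub_apply, smul_apply, one_apply_eq_self] at hsub
  rw [hsub]
  exact norm_mulOp_indicatorConstLp_le hs hμs hcg hgs

end Lp

end MeasureTheory

section WithDensityOnReal

variable {p : ℝ≥0∞} [Fact (1 ≤ p)] {w : ℝ → ℝ} {U : Set ℝ}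

theorem exists_measurableSet_withDensity_ne_zero_ne_top (hU : IsOpen U) (hw : ContinuousOn w U)
    (hw_pos : ∀ k ∈ U, 0 < w k) {g : ℝ → ℂ} (hg : ContinuousOn g U) {k₀ : ℝ} (hk₀ : k₀ ∈ U)
    {ε : ℝ} (hε : 0 < ε) :
    ∃ s, MeasurableSet s ∧ volume.withDensity (fun k => ENNReal.ofReal (w k)) s ≠ 0 ∧
      volume.withDensity (fun k => ENNReal.ofReal (w k)) s ≠ ∞ ∧ ∀ k ∈ s, ‖g k₀ - g k‖ ≤ ε := by
  obtain ⟨δ, hδ, hgδ⟩ := Metric.continuousAt_iff.1 (hg.continuousAt (hU.mem_nhds hk₀)) ε hε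
  obtain ⟨r, hr, hrU⟩ := Metric.isOpen_iff.1 hU k₀ hk₀
  set ρ := min δ r / 2
  have hρ : 0 < ρ := by positivity
  have hball : Icc (k₀ - ρ) (k₀ + ρ) ⊆ Metric.ball k₀ (min δ r) := by
    have : ρ < min δ r := half_lt_self (by positivity)
    intro k hk
    rw [Metric.mem_ball, Real.dist_eq, abs_lt]
    constructor <;> linarith [hk.1, hk.2]
  have hsU : Icc (k₀ - ρ) (k₀ + ρ) ⊆ U :=
    hball.trans ((Metric.ball_subset_ball (min_le_right _ _)).trans hrU)
  have hgs : ∀ k ∈ Icc (k₀ - ρ) (k₀ + ρ), ‖g k₀ - g k‖ ≤ ε := fun k hk => by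
    rw [← dist_eq_norm, dist_comm]
    exact (hgδ (Metric.ball_subset_ball (min_le_left δ r) (hball hk))).le
  refine ⟨Icc (k₀ - ρ) (k₀ + ρ), measurableSet_Icc, ?_, ?_, hgs⟩ <;>
    rw [withDensity_apply _ measurableSet_Icc]
  · obtain ⟨k₁, hk₁, hmin⟩ :=
      isCompact_Icc.exists_isMinOn (nonempty_Icc.2 (by linarith)) (hw.mono hsU)
    refine (lt_of_lt_of_le ?_ (setLIntegral_mono' measurableSet_Icc fun k hk =>
      ENNReal.ofReal_le_ofReal (hmin hk))).ne'
    rw [setLIntegral_const, Real.volume_Icc]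
    exact ENNReal.mul_pos (ENNReal.ofReal_pos.2 (hw_pos k₁ (hsU hk₁))).ne'
      (ENNReal.ofReal_pos.2 (by linarith)).ne'
  · exact ((hw.mono hsU).integrableOn_compact isCompact_Icc).lintegral_lt_top.ne

theorem closure_image_subset_spectrum_mulOp (hU : IsOpen U) (hw : ContinuousOn w U)
    (hw_pos : ∀ k ∈ U, 0 < w k) {g : ℝ → ℂ} (hg_cont : ContinuousOn g U)
    (hg : MemLp g ∞ (volume.withDensity fun k => ENNReal.ofReal (w k))) :
    closure (g '' U) ⊆ spectrum ℂ (Lp.mulOp _ p g hg) := by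
  refine (spectrum.isClosed _).closure_subset_iff.2 ?_
  rintro _ ⟨k₀, hk₀, rfl⟩
  exact Lp.mem_spectrum_mulOp hg fun ε hε =>
    exists_measurableSet_withDensity_ne_zero_ne_top hU hw hw_pos hg_cont hk₀ hε

theorem spectrum_mulOp_ofReal_eq_Icc (hU : IsOpen U) (hw : ContinuousOn w U)
    (hw_pos : ∀ k ∈ U, 0 < w k) {φ : ℝ → ℝ} (hφ : ContinuousOn φ U) {a b : ℝ} (hab : a < b)
    (hφ_mem : ∀ k, φ k ∈ Icc a b) (hφ_Ioo : Ioo a b ⊆ φ '' U)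
    (hg : MemLp (fun k => (φ k : ℂ)) ∞ (volume.withDensity fun k => ENNReal.ofReal (w k))) :
    spectrum ℂ (Lp.mulOp _ p _ hg) = Complex.ofReal '' Icc a b := by
  refine (Lp.spectrum_mulOp_subset (isCompact_Icc.image Complex.continuous_ofReal).isClosed hg
    fun k => mem_image_of_mem _ (hφ_mem k)).antisymm ?_
  calc Complex.ofReal '' Icc a b = Complex.ofReal '' closure (Ioo a b) := by
        rw [closure_Ioo hab.ne]
    _ ⊆ closure (Complex.ofReal '' Ioo a b) :=
        image_closure_subset_closure_image Complex.continuous_ofReal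
    _ ⊆ closure ((fun k => (φ k : ℂ)) '' U) := by
        rw [← image_image Complex.ofReal φ U]
        exact closure_mono (image_mono hφ_Ioo)
    _ ⊆ spectrum ℂ (Lp.mulOp _ p _ hg) :=
        closure_image_subset_spectrum_mulOp hU hw hw_pos
          (Complex.continuous_ofReal.comp_continuousOn hφ) hg

end WithDensityOnReal

section Crescent
variable {q : ℝ}

theorem continuous_m2 (q : ℝ) : Continuous (m2 q) := by
  unfold m2; fun_prop

theorem continuous_m1 (q : ℝ) : Continuous (m1 q) := by
  unfold m1; fun_prop

theorem m1_eq_neg_m2 (q k : ℝ) : m1 q k = -m2 q k := by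
  simp only [m1, m2]; ring

theorem m2_mem_Icc (hq : 0 ≤ q) (k : ℝ) : m2 q k ∈ Icc 0 (1 / 2) := by
  have : Real.exp (-(q * |k|)) ≤ 1 := Real.exp_le_one_iff.2 (by nlinarith [abs_nonneg k])
  exact ⟨by unfold m2; positivity, by unfold m2; linarith⟩

theorem m1_mem_Icc (hq : 0 ≤ q) (k : ℝ) : m1 q k ∈ Icc (-(1 / 2)) 0 := by
  obtain ⟨h₀, h₁⟩ := m2_mem_Icc hq k
  rw [m1_eq_neg_m2]
  exact ⟨by linarith, by linarith⟩

theorem volume_setOf_m2_eq (hq : q ≠ 0) (c : ℂ) : volume {k | (m2 q k : ℂ) = c} = 0 := by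
  rcases eq_empty_or_nonempty {k | (m2 q k : ℂ) = c} with h | ⟨k₀, hk₀⟩
  · rw [h, measure_empty]
  refine measure_mono_null (fun k hk => ?_) (((finite_singleton (-k₀)).insert k₀).measure_zero _)
  have habs : |k| = |k₀| := by
    have h : m2 q k = m2 q k₀ := by exact_mod_cast hk.trans hk₀.symm
    simpa [m2, hq] using h
  rcases abs_eq_abs.1 habs with h | h <;> simp [h]

theorem volume_setOf_m1_eq (hq : q ≠ 0) (c : ℂ) : volume {k | (m1 q k : ℂ) = c} = 0 := by
  simpa [m1_eq_neg_m2, neg_eq_iff_eq_neg] using volume_setOf_m2_eq hq (-c)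

theorem Ioo_subset_image_m2 (hq : 0 < q) : Ioo 0 (1 / 2) ⊆ m2 q '' Ioi 0 := by
  intro s ⟨hs₀, hs₁⟩
  have hlog : Real.log (2 * s) < 0 := Real.log_neg (by linarith) (by linarith)
  have hk : 0 < -Real.log (2 * s) / q := div_pos (by linarith) hq
  refine ⟨-Real.log (2 * s) / q, hk, ?_⟩
  rw [m2, abs_of_pos hk, mul_div_cancel₀ _ hq.ne', neg_neg, Real.exp_log (by linarith)]
  ring

theorem Ioo_subset_image_m1 (hq : 0 < q) : Ioo (-(1 / 2)) 0 ⊆ m1 q '' Ioi 0 := by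
  intro s hs
  obtain ⟨k, hk, hks⟩ := Ioo_subset_image_m2 hq ⟨neg_pos.2 hs.2, by linarith [hs.1]⟩
  exact ⟨k, hk, by rw [m1_eq_neg_m2, hks, neg_neg]⟩

theorem continuousOn_w1 (q : ℝ) : ContinuousOn (w1 q) (Ioi 0) := by
  unfold w1
  exact ContinuousOn.div (by fun_prop) (by fun_prop) fun k hk => by
    have : 0 < |k| := abs_pos.2 (ne_of_gt hk); positivity

theorem continuousOn_w2 (q : ℝ) : ContinuousOn (w2 q) (Ioi 0) := by
  unfold w2
  exact ContinuousOn.div (by fun_prop) (by fun_prop) fun k hk => by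
    have : 0 < |k| := abs_pos.2 (ne_of_gt hk); positivity

theorem w1_pos (hq : 0 < q) {k : ℝ} (hk : k ≠ 0) : 0 < w1 q k := by
  have hk' : 0 < |k| := abs_pos.2 hk
  have : Real.exp (-(q * |k|)) < 1 := Real.exp_lt_one_iff.2 (by nlinarith)
  unfold w1
  exact div_pos (by linarith) (by positivity)

theorem w2_pos (q : ℝ) {k : ℝ} (hk : k ≠ 0) : 0 < w2 q k := by
  have : 0 < |k| := abs_pos.2 hk
  unfold w2
  positivity

theorem memLp_top_m1 (hq : 0 ≤ q) (μ : Measure ℝ) : MemLp (fun k => (m1 q k : ℂ)) ∞ μ :=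
  memLp_top_ofReal (continuous_m1 q).measurable (fun k => abs_le.2 ⟨(m1_mem_Icc hq k).1,
    (m1_mem_Icc hq k).2.trans (by norm_num)⟩) μ

theorem memLp_top_m2 (hq : 0 ≤ q) (μ : Measure ℝ) : MemLp (fun k => (m2 q k : ℂ)) ∞ μ :=
  memLp_top_ofReal (continuous_m2 q).measurable (fun k => abs_le.2 ⟨by
    linarith [(m2_mem_Icc hq k).1], (m2_mem_Icc hq k).2⟩) μ

theorem spectrum_mulOp_m1 (hq : 0 < q) :
    spectrum ℂ (Lp.mulOp (mu1 q) 2 _ (memLp_top_m1 hq.le _)) =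
      Complex.ofReal '' Icc (-(1 / 2)) 0 :=
  spectrum_mulOp_ofReal_eq_Icc isOpen_Ioi (continuousOn_w1 q) (fun _ hk => w1_pos hq (ne_of_gt hk))
    (continuous_m1 q).continuousOn (by norm_num) (m1_mem_Icc hq.le) (Ioo_subset_image_m1 hq) _

theorem spectrum_mulOp_m2 (hq : 0 < q) :
    spectrum ℂ (Lp.mulOp (mu2 q) 2 _ (memLp_top_m2 hq.le _)) = Complex.ofReal '' Icc 0 (1 / 2) :=
  spectrum_mulOp_ofReal_eq_Icc isOpen_Ioi (continuousOn_w2 q) (fun _ hk => w2_pos q (ne_of_gt hk))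
    (continuous_m2 q).continuousOn (by norm_num) (m2_mem_Icc hq.le) (Ioo_subset_image_m2 hq) _

end Crescent

/-- The Neumann–Poincaré operator of the crescent domain, realized in
frequency variables as the multiplication operator
`M(f₁,f₂) = (-(1/2)e^{-q|k|} f₁, (1/2)e^{-q|k|} f₂)` on `H`, has spectrum equal to the
real interval `[-1/2, 1/2] ⊂ ℂ` and has no eigenvalues. -/
theorem neumannPoincare_crescent_spectrum_no_eigenvalues (q : ℝ) (hq : 0 < q) :
    ∃ M : Hsp q →L[ℂ] Hsp q,
      (∀ f : Hsp q,
        ((WithLp.equiv 2 _ (M f)).1 : ℝ → ℂ) =ᵐ[mu1 q]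
          (fun k => (m1 q k : ℂ) * (WithLp.equiv 2 _ f).1 k) ∧
        ((WithLp.equiv 2 _ (M f)).2 : ℝ → ℂ) =ᵐ[mu2 q]
          (fun k => (m2 q k : ℂ) * (WithLp.equiv 2 _ f).2 k)) ∧
      spectrum ℂ M = Complex.ofReal '' Icc (-(1/2) : ℝ) (1/2) ∧
      ∀ (lam : ℂ) (f : Hsp q), M f = lam • f → f = 0 := by
  set T₁ := Lp.mulOp (mu1 q) 2 _ (memLp_top_m1 hq.le _)
  set T₂ := Lp.mulOp (mu2 q) 2 _ (memLp_top_m2 hq.le _)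
  refine ⟨T₁.withLpProdMap 2 T₂, fun f => ⟨Lp.mulOp_ae_eq _ _, Lp.mulOp_ae_eq _ _⟩, ?_,
    fun lam f hf => ?_⟩
  · rw [ContinuousLinearMap.spectrum_withLpProdMap, spectrum_mulOp_m1 hq, spectrum_mulOp_m2 hq,
      ← image_union, Icc_union_Icc_eq_Icc (by norm_num) (by norm_num)]
  · have h₁ : T₁ f.fst = lam • f.fst := by simpa using congrArg WithLp.fst hf
    have h₂ : T₂ f.snd = lam • f.snd := by simpa using congrArg WithLp.snd hf
    refine WithLp.ofLp_injective 2 (Prod.ext ?_ ?_)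
    · exact Lp.eq_zero_of_mulOp_eq_smul _
        (withDensity_absolutelyContinuous _ _ (volume_setOf_m1_eq hq.ne' lam)) h₁
    · exact Lp.eq_zero_of_mulOp_eq_smul _
        (withDensity_absolutelyContinuous _ _ (volume_setOf_m2_eq hq.ne' lam)) h₂
end
end

section
/- Let q > 0 and let H, E(t) be as in the context, and let f = (f₁, f₂) ∈ H with f₁ and f₂ continuous on ℝ. Then the function e_f(t) = ⟨f, E(t) f⟩ is differentiable at every t ∈ (-1/2, 0) ∪ (0, 1/2), with derivative e_f'(t) = (1 + 2t)/(2 |t| · |ln(2|t|)|) · ( |f₁(s_t)|² + |f₁(-s_t)|² ) for t ∈ (-1/2, 0), and e_f'(t) = (1 + 2t)/(2 t · |ln(2t)|) · ( |f₂(s_t)|² + |f₂(-s_t)|² ) for t ∈ (0, 1/2), where s_t = |ln(2|t|)|/q. -/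
open MeasureTheory Set

noncomputable section

/-- `A₁(t) = {k : -(1/2)e^{-q|k|} ≤ t}`. -/
def A1 (q t : ℝ) : Set ℝ := {k | m1 q k ≤ t}

/-- `A₂(t) = {k : (1/2)e^{-q|k|} ≤ t}`. -/
def A2 (q t : ℝ) : Set ℝ := {k | m2 q k ≤ t}

/-- `e_f(t) = ⟨f, E(t) f⟩` for `f = (f₁, f₂) ∈ H = L²(μ₁) × L²(μ₂)`, where
`E(t)(f₁,f₂) = (1_{A₁(t)} f₁, 1_{A₂(t)} f₂)`. -/
def eSpec (q : ℝ) (f₁ f₂ : ℝ → ℂ) (t : ℝ) : ℝ :=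
  (∫ k in A1 q t, ‖f₁ k‖ ^ 2 ∂(mu1 q)) + (∫ k in A2 q t, ‖f₂ k‖ ^ 2 ∂(mu2 q))

/-! For `t < 0` the set `A₂(t)` is empty and `A₁(t) = [-s_t, s_t]`; for `t > 0` the set `A₁(t)`
is all of `ℝ` and `A₂(t)` is the complement of `(-s_t, s_t)`. So near such a `t`, `e_f` is, up to
an additive constant and a sign, `u ↦ ∫_{-s_u}^{s_u} wᵢ ‖fᵢ‖²`, and the fundamental theorem of
calculus with the chain rule gives `(wᵢ ‖fᵢ‖²(s_t) + wᵢ ‖fᵢ‖²(-s_t)) · ds_t/dt` with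
`ds_t/dt = -1/(q t)`. Finally `e^{-q s_t} = 2|t|`, so `wᵢ(±s_t) = (1 + 2t)/(2 s_t)` on the relevant
side. -/

section WithDensity

variable {α : Type*} [MeasurableSpace α] {μ : Measure α} {w : α → ℝ}

theorem setIntegral_withDensity_ofReal (hw : Measurable w) (hw0 : ∀ x, 0 ≤ w x)
    (g : α → ℝ) {s : Set α} (hs : MeasurableSet s) :
    ∫ x in s, g x ∂μ.withDensity (fun x => ENNReal.ofReal (w x)) = ∫ x in s, w x * g x ∂μ := by
  rw [setIntegral_withDensity_eq_setIntegral_toReal_smul hw.ennreal_ofReal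
    (.of_forall fun _ => ENNReal.ofReal_lt_top) g hs]
  simp only [ENNReal.toReal_ofReal (hw0 _), smul_eq_mul]

theorem MemLp.integrable_mul_norm_sq_of_withDensity {E : Type*} [NormedAddCommGroup E]
    (hw : Measurable w) (hw0 : ∀ x, 0 ≤ w x) {f : α → E}
    (hf : MemLp f 2 (μ.withDensity fun x => ENNReal.ofReal (w x))) :
    Integrable (fun x => w x * ‖f x‖ ^ 2) μ := by
  have h := hf.integrable_norm_pow two_ne_zero
  rw [integrable_withDensity_iff hw.ennreal_ofReal (.of_forall fun _ => ENNReal.ofReal_lt_top)]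
    at h
  simpa only [ENNReal.toReal_ofReal (hw0 _), mul_comm] using h

end WithDensity

theorem hasDerivAt_intervalIntegral_neg_self {E : Type*} [NormedAddCommGroup E]
    [NormedSpace ℝ E] [CompleteSpace E] {g : ℝ → E} (hg : Integrable g) {r : ℝ}
    (hr : ContinuousAt g r) (hr' : ContinuousAt g (-r)) :
    HasDerivAt (fun u => ∫ x in -u..u, g x) (g r + g (-r)) r := by
  have hF : ∀ v, ContinuousAt g v →
      HasDerivAt (fun u => ∫ x in (0 : ℝ)..u, g x) (g v) v := fun v hv =>
    intervalIntegral.integral_hasDerivAt_right hg.intervalIntegrable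
      hg.aestronglyMeasurable.stronglyMeasurableAtFilter hv
  have hneg := (hF (-r) hr').scomp r (hasDerivAt_neg r)
  convert (hF r hr).sub hneg using 1
  · ext u
    exact (intervalIntegral.integral_interval_sub_left hg.intervalIntegrable
      hg.intervalIntegrable).symm
  · simp

theorem setIntegral_Icc_neg_self (g : ℝ → ℝ) {r : ℝ} (hr : 0 ≤ r) :
    ∫ x in Icc (-r) r, g x = ∫ x in -r..r, g x := by
  rw [integral_Icc_eq_integral_Ioc, intervalIntegral.integral_of_le (by linarith)]

theorem setIntegral_compl_Ioo_neg_self {g : ℝ → ℝ} (hg : Integrable g) {r : ℝ} (hr : 0 ≤ r) :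
    ∫ x in (Ioo (-r) r)ᶜ, g x = (∫ x, g x) - ∫ x in -r..r, g x := by
  rw [setIntegral_compl measurableSet_Ioo hg, ← integral_Icc_eq_integral_Ioo,
    setIntegral_Icc_neg_self g hr]

theorem le_exp_neg_mul_abs_iff {q c : ℝ} (hq : 0 < q) (hc : 0 < c) (k : ℝ) :
    c ≤ Real.exp (-(q * |k|)) ↔ |k| ≤ -Real.log c / q := by
  rw [← Real.log_le_iff_le_exp hc, le_div_iff₀ hq]
  constructor <;> intro h <;> linarith

theorem exp_neg_mul_abs_le_iff {q c : ℝ} (hq : 0 < q) (hc : 0 < c) (k : ℝ) :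
    Real.exp (-(q * |k|)) ≤ c ↔ -Real.log c / q ≤ |k| := by
  rw [← Real.le_log_iff_exp_le hc, div_le_iff₀ hq]
  constructor <;> intro h <;> linarith

/-- The radius `s_t = |ln(2|t|)|/q` of the paper when `|t| ≤ 1/2`, written as `-ln(2t)/q`
(`Real.log` is even), which makes it differentiable at every `t ≠ 0`. -/
def crescentRadius (q t : ℝ) : ℝ := -Real.log (2 * t) / q

section CrescentRadius

variable {q t : ℝ}

theorem crescentRadius_pos (hq : 0 < q) (ht : t ≠ 0) (ht' : |t| < 1 / 2) :
    0 < crescentRadius q t := by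
  have : Real.log (2 * t) < 0 := by
    rw [← Real.log_abs, abs_mul, abs_two]
    exact Real.log_neg (by positivity) (by linarith)
  exact div_pos (neg_pos.mpr this) hq

theorem abs_log_two_mul_abs_eq_mul_crescentRadius (hq : q ≠ 0) (ht : |t| ≤ 1 / 2) :
    |Real.log (2 * |t|)| = q * crescentRadius q t := by
  have : Real.log (2 * |t|) ≤ 0 := Real.log_nonpos (by positivity) (by linarith)
  rw [abs_of_nonpos this, crescentRadius, mul_div_cancel₀ _ hq, ← Real.log_abs (2 * t), abs_mul,
    abs_two]

theorem exp_neg_mul_crescentRadius (hq : q ≠ 0) (ht : t ≠ 0) :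
    Real.exp (-(q * crescentRadius q t)) = 2 * |t| := by
  rw [crescentRadius, mul_div_cancel₀ _ hq, neg_neg, ← Real.log_abs, Real.exp_log (by positivity),
    abs_mul, abs_two]

theorem hasDerivAt_crescentRadius (ht : t ≠ 0) :
    HasDerivAt (crescentRadius q) (-t⁻¹ / q) t := by
  have h := (((hasDerivAt_id' t).const_mul 2).log (by simpa using ht)).neg.div_const q
  refine h.congr_deriv ?_
  field_simp

end CrescentRadius

section SpectralSets

variable {q t : ℝ}

theorem A1_eq_Icc (hq : 0 < q) (ht : t < 0) :
    A1 q t = Icc (-crescentRadius q t) (crescentRadius q t) := by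
  ext k
  have h := le_exp_neg_mul_abs_iff hq (neg_pos.mpr (mul_neg_of_pos_of_neg two_pos ht)) k
  rw [Real.log_neg_eq_log] at h
  simp only [A1, m1, mem_ofPred_eq, mem_Icc, ← abs_le, crescentRadius, ← h]
  constructor <;> intro h <;> linarith

theorem A1_eq_univ (ht : 0 ≤ t) : A1 q t = univ :=
  eq_univ_of_forall fun k => by
    simp only [A1, m1, mem_ofPred_eq]
    nlinarith [Real.exp_pos (-(q * |k|))]

theorem A2_eq_empty (ht : t ≤ 0) : A2 q t = ∅ :=
  eq_empty_of_forall_notMem fun k => by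
    simp only [A2, m2, mem_ofPred_eq, not_le]
    nlinarith [Real.exp_pos (-(q * |k|))]

theorem A2_eq_compl_Ioo (hq : 0 < q) (ht : 0 < t) :
    A2 q t = (Ioo (-crescentRadius q t) (crescentRadius q t))ᶜ := by
  ext k
  have h := exp_neg_mul_abs_le_iff hq (mul_pos two_pos ht) k
  simp only [A2, m2, mem_ofPred_eq, mem_compl_iff, mem_Ioo, ← abs_lt, not_lt, crescentRadius, ← h]
  constructor <;> intro h <;> linarith

end SpectralSets

section Density

variable {q : ℝ}

theorem measurable_w1 : Measurable (w1 q) := by unfold w1; fun_prop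

theorem measurable_w2 : Measurable (w2 q) := by unfold w2; fun_prop

theorem w1_nonneg (hq : 0 ≤ q) (k : ℝ) : 0 ≤ w1 q k := by
  have : Real.exp (-(q * |k|)) ≤ 1 := Real.exp_le_one_iff.mpr (neg_nonpos.mpr (by positivity))
  unfold w1
  exact div_nonneg (by linarith) (by positivity)

theorem w2_nonneg (k : ℝ) : 0 ≤ w2 q k := by unfold w2; positivity

theorem continuousAt_w1 {k : ℝ} (hk : k ≠ 0) : ContinuousAt (w1 q) k := by
  unfold w1
  exact ContinuousAt.div (by fun_prop) (by fun_prop) (by positivity)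

theorem continuousAt_w2 {k : ℝ} (hk : k ≠ 0) : ContinuousAt (w2 q) k := by
  unfold w2
  exact ContinuousAt.div (by fun_prop) (by fun_prop) (by positivity)

theorem w1_neg (k : ℝ) : w1 q (-k) = w1 q k := by simp [w1]

theorem w2_neg (k : ℝ) : w2 q (-k) = w2 q k := by simp [w2]

variable {t : ℝ}

theorem w1_crescentRadius (hq : 0 < q) (ht : t ≠ 0) (ht' : |t| < 1 / 2) :
    w1 q (crescentRadius q t) = (1 - 2 * |t|) / (2 * crescentRadius q t) := by
  rw [w1, abs_of_pos (crescentRadius_pos hq ht ht'), exp_neg_mul_crescentRadius hq.ne' ht]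

theorem w2_crescentRadius (hq : 0 < q) (ht : t ≠ 0) (ht' : |t| < 1 / 2) :
    w2 q (crescentRadius q t) = (1 + 2 * |t|) / (2 * crescentRadius q t) := by
  rw [w2, abs_of_pos (crescentRadius_pos hq ht ht'), exp_neg_mul_crescentRadius hq.ne' ht]

end Density

section SpectralFunction

variable {q t : ℝ} {f₁ f₂ : ℝ → ℂ}

theorem eSpec_eq_setIntegral (hq : 0 ≤ q) :
    eSpec q f₁ f₂ t =
      (∫ k in A1 q t, w1 q k * ‖f₁ k‖ ^ 2) + ∫ k in A2 q t, w2 q k * ‖f₂ k‖ ^ 2 := by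
  have hA1 : MeasurableSet (A1 q t) := measurableSet_le (by unfold m1; fun_prop) measurable_const
  have hA2 : MeasurableSet (A2 q t) := measurableSet_le (by unfold m2; fun_prop) measurable_const
  rw [eSpec, mu1, mu2, setIntegral_withDensity_ofReal measurable_w1 (w1_nonneg hq) _ hA1,
    setIntegral_withDensity_ofReal measurable_w2 w2_nonneg _ hA2]

theorem eSpec_of_neg (hq : 0 < q) (ht : t ∈ Ioo (-(1 / 2)) 0) :
    eSpec q f₁ f₂ t =
      ∫ k in -crescentRadius q t..crescentRadius q t, w1 q k * ‖f₁ k‖ ^ 2 := by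
  have hr := crescentRadius_pos hq ht.2.ne (by rw [abs_of_neg ht.2]; linarith [ht.1])
  rw [eSpec_eq_setIntegral hq.le, A1_eq_Icc hq ht.2, A2_eq_empty ht.2.le, setIntegral_empty,
    add_zero, setIntegral_Icc_neg_self _ hr.le]

theorem eSpec_of_pos (hq : 0 < q) (hf₂ : Integrable fun k => w2 q k * ‖f₂ k‖ ^ 2)
    (ht : t ∈ Ioo 0 (1 / 2)) :
    eSpec q f₁ f₂ t = (∫ k, w1 q k * ‖f₁ k‖ ^ 2) + ((∫ k, w2 q k * ‖f₂ k‖ ^ 2) -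
      ∫ k in -crescentRadius q t..crescentRadius q t, w2 q k * ‖f₂ k‖ ^ 2) := by
  have hr := crescentRadius_pos hq ht.1.ne' (by rw [abs_of_pos ht.1]; exact ht.2)
  rw [eSpec_eq_setIntegral hq.le, A1_eq_univ ht.1.le, setIntegral_univ, A2_eq_compl_Ioo hq ht.1,
    setIntegral_compl_Ioo_neg_self hf₂ hr.le]

theorem hasDerivAt_intervalIntegral_crescentRadius {g : ℝ → ℝ} (hg : Integrable g)
    (hgc : ∀ k ≠ 0, ContinuousAt g k) (hq : 0 < q) (ht : t ≠ 0) (ht' : |t| < 1 / 2) :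
    HasDerivAt (fun u => ∫ x in -crescentRadius q u..crescentRadius q u, g x)
      ((g (crescentRadius q t) + g (-crescentRadius q t)) * (-t⁻¹ / q)) t := by
  have hr := (crescentRadius_pos hq ht ht').ne'
  exact (hasDerivAt_intervalIntegral_neg_self hg (hgc _ hr) (hgc _ (neg_ne_zero.mpr hr))).comp t
    (hasDerivAt_crescentRadius ht)

theorem hasDerivAt_eSpec_of_neg (hq : 0 < q) (hf₁ : MemLp f₁ 2 (mu1 q)) (hc₁ : Continuous f₁)
    (ht : t ∈ Ioo (-(1 / 2)) 0) :
    HasDerivAt (eSpec q f₁ f₂)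
      ((1 + 2*t) / (2 * |t| * |Real.log (2*|t|)|) *
        (‖f₁ (|Real.log (2*|t|)| / q)‖ ^ 2 + ‖f₁ (-(|Real.log (2*|t|)| / q))‖ ^ 2)) t := by
  have habs : |t| = -t := abs_of_neg ht.2
  have ht' : |t| < 1 / 2 := by linarith [ht.1]
  have hg := MemLp.integrable_mul_norm_sq_of_withDensity measurable_w1 (w1_nonneg hq.le) hf₁
  have hgc : ∀ k ≠ 0, ContinuousAt (fun k => w1 q k * ‖f₁ k‖ ^ 2) k := fun k hk =>
    (continuousAt_w1 hk).mul (by fun_prop)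
  have hD := hasDerivAt_intervalIntegral_crescentRadius hg hgc hq ht.2.ne ht'
  refine (hD.congr_of_eventuallyEq <| Filter.eventually_of_mem (Ioo_mem_nhds ht.1 ht.2)
    fun u hu => eSpec_of_neg hq hu).congr_deriv ?_
  rw [abs_log_two_mul_abs_eq_mul_crescentRadius hq.ne' ht'.le, mul_div_cancel_left₀ _ hq.ne',
    w1_neg, w1_crescentRadius hq ht.2.ne ht', habs]
  field_simp
  ring

theorem hasDerivAt_eSpec_of_pos (hq : 0 < q) (hf₂ : MemLp f₂ 2 (mu2 q)) (hc₂ : Continuous f₂)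
    (ht : t ∈ Ioo 0 (1 / 2)) :
    HasDerivAt (eSpec q f₁ f₂)
      ((1 + 2*t) / (2 * t * |Real.log (2*t)|) *
        (‖f₂ (|Real.log (2*|t|)| / q)‖ ^ 2 + ‖f₂ (-(|Real.log (2*|t|)| / q))‖ ^ 2)) t := by
  have habs : |t| = t := abs_of_pos ht.1
  have ht' : |t| < 1 / 2 := by rw [habs]; exact ht.2
  have hg := MemLp.integrable_mul_norm_sq_of_withDensity measurable_w2 w2_nonneg hf₂
  have hgc : ∀ k ≠ 0, ContinuousAt (fun k => w2 q k * ‖f₂ k‖ ^ 2) k := fun k hk =>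
    (continuousAt_w2 hk).mul (by fun_prop)
  have hD := ((hasDerivAt_intervalIntegral_crescentRadius hg hgc hq ht.1.ne' ht').const_sub
    (∫ k, w2 q k * ‖f₂ k‖ ^ 2)).const_add (∫ k, w1 q k * ‖f₁ k‖ ^ 2)
  refine (hD.congr_of_eventuallyEq <| Filter.eventually_of_mem (Ioo_mem_nhds ht.1 ht.2)
    fun u hu => eSpec_of_pos hq hg hu).congr_deriv ?_
  rw [show Real.log (2 * t) = Real.log (2 * |t|) by rw [habs],
    abs_log_two_mul_abs_eq_mul_crescentRadius hq.ne' ht'.le, mul_div_cancel_left₀ _ hq.ne',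
    w2_neg, w2_crescentRadius hq ht.1.ne' ht', habs]
  field_simp

end SpectralFunction

/-- For `f = (f₁,f₂) ∈ H` with `f₁, f₂` continuous,
`e_f(t) = ⟨f, E(t) f⟩` is differentiable on `(-1/2,0) ∪ (0,1/2)`, with the explicit
derivative given by the spectral density of Lemma 3.6 of the paper, where
`s_t = |ln(2|t|)|/q`. -/
theorem neumannPoincare_crescent_spectral_density
    (q : ℝ) (hq : 0 < q) (f₁ f₂ : ℝ → ℂ)
    (hf₁ : MemLp f₁ 2 (mu1 q)) (hf₂ : MemLp f₂ 2 (mu2 q))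
    (hc₁ : Continuous f₁) (hc₂ : Continuous f₂) :
    (∀ t ∈ Ioo (-(1/2) : ℝ) 0,
      HasDerivAt (eSpec q f₁ f₂)
        ((1 + 2*t) / (2 * |t| * |Real.log (2*|t|)|) *
          (‖f₁ (|Real.log (2*|t|)| / q)‖ ^ 2 + ‖f₁ (-(|Real.log (2*|t|)| / q))‖ ^ 2)) t) ∧
    (∀ t ∈ Ioo (0 : ℝ) (1/2),
      HasDerivAt (eSpec q f₁ f₂)
        ((1 + 2*t) / (2 * t * |Real.log (2*t)|) *
          (‖f₂ (|Real.log (2*|t|)| / q)‖ ^ 2 + ‖f₂ (-(|Real.log (2*|t|)| / q))‖ ^ 2)) t) :=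
  ⟨fun _ ht => hasDerivAt_eSpec_of_neg hq hf₁ hc₁ ht,
    fun _ ht => hasDerivAt_eSpec_of_pos hq hf₂ hc₂ ht⟩
end
end

section
/- Let q > 0 and let H, E(t) be as in the context. For every f ∈ H, the Lebesgue–Stieltjes measure μ_f of the nondecreasing right-continuous function e_f(t) = ⟨f, E(t) f⟩ (extended by 0 below -1/2 and by ‖f‖² above 1/2) is absolutely continuous with respect to Lebesgue measure on ℝ. Hence the multiplication operator M(f₁,f₂) = (-(1/2)e^{-q|k|} f₁, (1/2)e^{-q|k|} f₂), whose spectral family is E(t), has purely absolutely continuous spectral measures. -/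
/-!
The spectral measure of `f = (f₁, f₂)` is the sum of the push-forwards of `‖f₁‖² μ₁` and
`‖f₂‖² μ₂` under the multipliers `m₁, m₂`, and `e_f` is its distribution function. Both
measures `‖fᵢ‖² μᵢ` are absolutely continuous, and `k ↦ c e^{-q|k|}` pulls Lebesgue-null sets
back to null sets: `|·|` does so by symmetry, and `x ↦ c e^{-qx}` has the left inverse
`t ↦ -log (t / c) / q`, differentiable on its range, which maps null sets to null sets.
-/

open MeasureTheory Set

noncomputable section

open Function ProbabilityTheory

theorem quasiMeasurePreserving_of_leftInverse {E : Type*} [NormedAddCommGroup E]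
    [NormedSpace ℝ E] [FiniteDimensional ℝ E] [MeasurableSpace E] [BorelSpace E]
    (μ : Measure E) [μ.IsAddHaarMeasure] {f g : E → E} (hf : Measurable f)
    (hgf : LeftInverse g f) (hg : DifferentiableOn ℝ g (range f)) :
    Measure.QuasiMeasurePreserving f μ μ := by
  refine ⟨hf, Measure.AbsolutelyContinuous.mk fun N hN hμN => ?_⟩
  rw [Measure.map_apply hf hN]
  have hsub : f ⁻¹' N ⊆ g '' (N ∩ range f) := fun x hx => ⟨f x, ⟨hx, x, rfl⟩, hgf x⟩
  exact measure_mono_null hsub <| addHaar_image_eq_zero_of_differentiableOn_of_addHaar_eq_zero μ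
    (hg.mono inter_subset_right) (measure_mono_null inter_subset_left hμN)

theorem quasiMeasurePreserving_abs :
    Measure.QuasiMeasurePreserving (fun x : ℝ => |x|) volume volume := by
  refine ⟨continuous_abs.measurable, Measure.AbsolutelyContinuous.mk fun N hN hN0 => ?_⟩
  rw [Measure.map_apply continuous_abs.measurable hN]
  have hsub : (fun x : ℝ => |x|) ⁻¹' N ⊆ N ∪ Neg.neg ⁻¹' N := fun x hx => by
    rcases abs_choice x with h | h
    · exact Or.inl (by simpa [h] using hx)
    · exact Or.inr (by simpa [h] using hx)
  refine measure_mono_null hsub (measure_union_null hN0 ?_)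
  rwa [Measure.measure_preimage_neg]

theorem quasiMeasurePreserving_mul_exp_neg_mul {c q : ℝ} (hc : c ≠ 0) (hq : q ≠ 0) :
    Measure.QuasiMeasurePreserving (fun x => c * Real.exp (-(q * x))) volume volume := by
  refine quasiMeasurePreserving_of_leftInverse volume (g := fun t => -Real.log (t / c) / q)
    (by fun_prop) (fun x => ?_) ?_
  · simp only [mul_div_cancel_left₀ _ hc, Real.log_exp]
    field_simp
  · rintro _ ⟨x, rfl⟩
    have hne : c * Real.exp (-(q * x)) / c ≠ 0 := by positivity
    exact DifferentiableAt.differentiableWithinAt (by fun_prop (disch := exact hne))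

theorem quasiMeasurePreserving_mul_exp_neg_mul_abs {c q : ℝ} (hc : c ≠ 0) (hq : q ≠ 0) :
    Measure.QuasiMeasurePreserving (fun k => c * Real.exp (-(q * |k|))) volume volume :=
  (quasiMeasurePreserving_mul_exp_neg_mul hc hq).comp quasiMeasurePreserving_abs

theorem StieltjesFunction.exists_measure_eq (ρ : Measure ℝ) [IsFiniteMeasure ρ] :
    ∃ S : StieltjesFunction ℝ, (∀ t, S t = ρ.real (Iic t)) ∧ S.measure = ρ := by
  rcases eq_zero_or_neZero ρ with rfl | hρ
  · exact ⟨0, fun t => by simp, StieltjesFunction.measure_zero⟩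
  refine ⟨(ρ univ).toNNReal • cdf ((ρ univ)⁻¹ • ρ), fun t => ?_, ?_⟩
  · change ((ρ univ).toNNReal : ℝ) * cdf _ t = _
    rw [cdf_eq_real, measureReal_ennreal_smul_apply, ← mul_assoc,
      ENNReal.toReal_inv, ENNReal.coe_toNNReal_eq_toReal, ← measureReal_def,
      mul_inv_cancel₀ ((measureReal_ne_zero_iff (measure_ne_top ρ univ)).2 (NeZero.ne _)), one_mul]
  · rw [StieltjesFunction.measure_smul, measure_cdf, ENNReal.smul_def, smul_smul,
      ENNReal.coe_toNNReal (measure_ne_top ρ univ), ENNReal.mul_inv_cancel (NeZero.ne (ρ univ))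
      (measure_ne_top ρ univ), one_smul]

section SpectralMeasure

variable {α E : Type*} [MeasurableSpace α] [NormedAddCommGroup E] {μ : Measure α} {f : α → E}

def spectralMeasureOfMul (μ : Measure α) (m : α → ℝ) (f : α → E) : Measure ℝ :=
  (μ.withDensity fun k => ENNReal.ofReal (‖f k‖ ^ 2)).map m

theorem isFiniteMeasure_spectralMeasureOfMul (m : α → ℝ) (hf : MemLp f 2 μ) :
    IsFiniteMeasure (spectralMeasureOfMul μ m f) :=
  have := isFiniteMeasure_withDensity_ofReal (hf.integrable_norm_pow two_ne_zero).2
  Measure.isFiniteMeasure_map _ m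

theorem setIntegral_norm_sq_eq_spectralMeasureOfMul_real {m : α → ℝ} (hm : Measurable m)
    (hf : AEStronglyMeasurable f μ) (t : ℝ) :
    ∫ k in {k | m k ≤ t}, ‖f k‖ ^ 2 ∂μ = (spectralMeasureOfMul μ m f).real (Iic t) := by
  rw [spectralMeasureOfMul, map_measureReal_apply hm measurableSet_Iic, measureReal_def,
    withDensity_apply _ (hm measurableSet_Iic), integral_eq_lintegral_of_nonneg_ae
      (ae_of_all _ fun k => by positivity) (hf.norm.fun_pow 2).restrict]
  rfl

theorem spectralMeasureOfMul_absolutelyContinuous {ν : Measure α} {m : α → ℝ} (hμ : μ ≪ ν)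
    (hm : Measure.QuasiMeasurePreserving m ν volume) :
    spectralMeasureOfMul μ m f ≪ volume :=
  (hm.mono_left ((withDensity_absolutelyContinuous μ _).trans hμ)).absolutelyContinuous

end SpectralMeasure

/-- For every `f = (f₁,f₂) ∈ H`, the nondecreasing right-continuous
function `e_f(t) = ⟨f, E(t) f⟩` (which vanishes below `-1/2` and equals `‖f‖²` above
`1/2`) is a Stieltjes function whose Lebesgue–Stieltjes measure is absolutely continuous
with respect to Lebesgue measure: the multiplication operator
`M(f₁,f₂) = (-(1/2)e^{-q|k|} f₁, (1/2)e^{-q|k|} f₂)`, whose spectral family is `E(t)`,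
has purely absolutely continuous spectral measures. -/
theorem neumannPoincare_crescent_spectral_measures_absolutely_continuous
    (q : ℝ) (hq : 0 < q) (f₁ f₂ : ℝ → ℂ)
    (hf₁ : MemLp f₁ 2 (mu1 q)) (hf₂ : MemLp f₂ 2 (mu2 q)) :
    ∃ S : StieltjesFunction ℝ,
      (∀ t : ℝ, S t = eSpec q f₁ f₂ t) ∧
      S.measure ≪ (volume : Measure ℝ) := by
  have := isFiniteMeasure_spectralMeasureOfMul (m1 q) hf₁
  have := isFiniteMeasure_spectralMeasureOfMul (m2 q) hf₂
  obtain ⟨S, hS, hSρ⟩ := StieltjesFunction.exists_measure_eq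
    (spectralMeasureOfMul (mu1 q) (m1 q) f₁ + spectralMeasureOfMul (mu2 q) (m2 q) f₂)
  refine ⟨S, fun t => ?_, hSρ ▸ .add_left ?_ ?_⟩
  · rw [hS, measureReal_add_apply, eSpec, A1, A2,
      setIntegral_norm_sq_eq_spectralMeasureOfMul_real (by unfold m1; fun_prop) hf₁.1,
      setIntegral_norm_sq_eq_spectralMeasureOfMul_real (by unfold m2; fun_prop) hf₂.1]
  · exact spectralMeasureOfMul_absolutelyContinuous (withDensity_absolutelyContinuous _ _)
      (quasiMeasurePreserving_mul_exp_neg_mul_abs (by norm_num) hq.ne')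
  · exact spectralMeasureOfMul_absolutelyContinuous (withDensity_absolutelyContinuous _ _)
      (quasiMeasurePreserving_mul_exp_neg_mul_abs (by norm_num) hq.ne')
end
end

section
/- Let R > r > 0. Let f_R, f_r ∈ L¹(ℝ;ℂ) ∩ L²(ℝ;ℂ) with ∫_ℝ f_R + ∫_ℝ f_r = 0. Then for every x ∈ (1/(2R), 1/(2r)) and every y ∈ ℝ, (1/(4π)) ∫_ℝ [ ln((x - 1/(2R))² + (y-t)²) - ln((1/(2R))² + t²) ] f_R(t) dt + (1/(4π)) ∫_ℝ [ ln((x - 1/(2r))² + (y-t)²) - ln((1/(2r))² + t²) ] f_r(t) dt = -(1/(4π)) ∫_ℝ (1/|k|) [ (e^{-|k|(x - 1/(2R))} e^{iky} - e^{-|k|/(2R)}) f̂_R(k) + (e^{-|k|(1/(2r) - x)} e^{iky} - e^{-|k|/(2r)}) f̂_r(k) ] dk, where both sides are absolutely convergent integrals. -/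
/-!
For `Re p, Re q > 0`, writing `(e^{-pk} - e^{-qk}) / k` as an integral of `e^{-sk}` over the
segment from `p` to `q` and swapping the integrals gives the complex Frullani integral
`∫₀^∞ (e^{-pk} - e^{-qk}) / k dk = log q - log p`. Applied on both half-lines with
`p = a ∓ iu`, `q = b ∓ iv`, the two branches of the logarithm combine to
`∫ (e^{-|k|a} e^{iku} - e^{-|k|b} e^{ikv}) / |k| dk = log (b² + v²) - log (a² + u²)`.
Since this kernel is bounded by `C e^{-min a b |k|}`, Fubini against an integrable density turns
each logarithmic potential into minus the integral of the kernel against the Fourier transform;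
the two circles of the crescent are handled separately.
-/

open MeasureTheory Set Real

noncomputable section

/-- The unnormalized Fourier transform `ĝ(k) = ∫ g(t) e^{-ikt} dt`. -/
def fourierHat (g : ℝ → ℂ) (k : ℝ) : ℂ :=
  ∫ t : ℝ, g t * Complex.exp (-(Complex.I * k * t))

namespace Complex

lemma min_re_le_re_add_mul_sub (p q : ℂ) {θ : ℝ} (h0 : 0 ≤ θ) (h1 : θ ≤ 1) :
    min p.re q.re ≤ (p + θ * (q - p)).re := by
  simp only [add_re, re_ofReal_mul, sub_re]
  rcases le_total p.re q.re with h | h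
  · rw [min_eq_left h]; nlinarith
  · rw [min_eq_right h]; nlinarith

lemma hasDerivAt_add_mul_sub (p q : ℂ) (θ : ℝ) :
    HasDerivAt (fun θ : ℝ => p + θ * (q - p)) (q - p) θ := by
  simpa using ((hasDerivAt_id (θ : ℂ)).comp_ofReal.mul_const (q - p)).const_add p

lemma integral_div_add_mul_sub {p q : ℂ} (hp : 0 < p.re) (hq : 0 < q.re) :
    ∫ θ in (0:ℝ)..1, (q - p) / (p + θ * (q - p)) = log q - log p := by
  have hre : ∀ θ ∈ uIcc (0:ℝ) 1, 0 < (p + θ * (q - p)).re := fun θ hθ => by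
    rw [uIcc_of_le zero_le_one] at hθ
    exact (lt_min hp hq).trans_le (min_re_le_re_add_mul_sub p q hθ.1 hθ.2)
  have hderiv : ∀ θ ∈ uIcc (0:ℝ) 1, HasDerivAt (fun θ : ℝ => log (p + θ * (q - p)))
      ((q - p) / (p + θ * (q - p))) θ := fun θ hθ => by
    simpa [div_eq_inv_mul, Function.comp_def] using
      (hasDerivAt_log (Or.inl (hre θ hθ))).comp θ (hasDerivAt_add_mul_sub p q θ)
  have hcont : ContinuousOn (fun θ : ℝ => (q - p) / (p + θ * (q - p))) (uIcc 0 1) :=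
    continuousOn_const.div (by fun_prop) fun θ hθ h => by simpa [h] using hre θ hθ
  simpa using intervalIntegral.integral_eq_sub_of_hasDerivAt hderiv hcont.intervalIntegrable

lemma integral_mul_exp_neg_add_mul_sub (p q : ℂ) {k : ℝ} (hk : k ≠ 0) :
    ∫ θ in (0:ℝ)..1, (q - p) * exp (-((p + θ * (q - p)) * k))
      = (exp (-(p * k)) - exp (-(q * k))) / k := by
  have hk' : (k : ℂ) ≠ 0 := ofReal_ne_zero.mpr hk
  have hderiv : ∀ θ ∈ uIcc (0:ℝ) 1,
      HasDerivAt (fun θ : ℝ => -exp (-((p + θ * (q - p)) * k)) / k)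
        ((q - p) * exp (-((p + θ * (q - p)) * k))) θ := fun θ _ => by
    have hlin : HasDerivAt (fun θ : ℝ => -((p + θ * (q - p)) * k)) (-((q - p) * k)) θ := by
      simpa using ((hasDerivAt_add_mul_sub p q θ).mul_const (k : ℂ)).fun_neg
    refine (hlin.cexp.fun_neg.div_const (k : ℂ)).congr_deriv ?_
    field_simp
  rw [intervalIntegral.integral_eq_sub_of_hasDerivAt hderiv
    (ContinuousOn.intervalIntegrable (by fun_prop))]
  push_cast
  ring_nf

lemma norm_mul_exp_neg_add_mul_sub_le (p q : ℂ) {θ k : ℝ} (h0 : 0 ≤ θ) (h1 : θ ≤ 1)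
    (hk : 0 ≤ k) :
    ‖(q - p) * exp (-((p + θ * (q - p)) * k))‖
      ≤ ‖q - p‖ * Real.exp (-(min p.re q.re * k)) := by
  rw [norm_mul, norm_exp]
  gcongr
  simpa using mul_le_mul_of_nonneg_right (min_re_le_re_add_mul_sub p q h0 h1) hk

lemma norm_exp_neg_sub_exp_neg_div_le (p q : ℂ) {k : ℝ} (hk : 0 < k) :
    ‖(exp (-(p * k)) - exp (-(q * k))) / k‖
      ≤ ‖q - p‖ * Real.exp (-(min p.re q.re * k)) := by
  rw [← integral_mul_exp_neg_add_mul_sub p q hk.ne']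
  have hbound : ∀ θ ∈ uIoc (0:ℝ) 1, ‖(q - p) * exp (-((p + θ * (q - p)) * k))‖
      ≤ ‖q - p‖ * Real.exp (-(min p.re q.re * k)) := fun θ hθ => by
    rw [uIoc_of_le zero_le_one] at hθ
    exact norm_mul_exp_neg_add_mul_sub_le p q hθ.1.le hθ.2 hk.le
  simpa using intervalIntegral.norm_integral_le_of_norm_le_const hbound

lemma integrable_mul_exp_neg_add_mul_sub {p q : ℂ} (hp : 0 < p.re) (hq : 0 < q.re) :
    Integrable (Function.uncurry fun (k θ : ℝ) => (q - p) * exp (-((p + θ * (q - p)) * k)))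
      ((volume.restrict (Ioi 0)).prod (volume.restrict (Ioc 0 1))) := by
  have hdom : Integrable (fun z : ℝ × ℝ => ‖q - p‖ * Real.exp (-(min p.re q.re * z.1)) * 1)
      ((volume.restrict (Ioi 0)).prod (volume.restrict (Ioc 0 1))) := by
    refine Integrable.mul_prod (f := fun k => ‖q - p‖ * Real.exp (-(min p.re q.re * k)))
      (Integrable.const_mul ?_ _) (integrable_const 1)
    simpa [IntegrableOn] using integrableOn_exp_mul_Ioi (neg_lt_zero.mpr (lt_min hp hq)) 0
  refine hdom.mono' (Continuous.aestronglyMeasurable (by fun_prop)) ?_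
  rw [Measure.prod_restrict]
  filter_upwards [ae_restrict_mem (measurableSet_Ioi.prod measurableSet_Ioc)] with z hz
  simpa only [Function.uncurry, mul_one] using
    norm_mul_exp_neg_add_mul_sub_le p q hz.2.1.le hz.2.2 (le_of_lt hz.1)

theorem integral_Ioi_exp_neg_sub_exp_neg_div {p q : ℂ} (hp : 0 < p.re) (hq : 0 < q.re) :
    ∫ k in Ioi (0:ℝ), (exp (-(p * k)) - exp (-(q * k))) / k = log q - log p := by
  have hlaplace : ∀ θ ∈ Ioc (0:ℝ) 1,
      ∫ k in Ioi (0:ℝ), (q - p) * exp (-((p + θ * (q - p)) * k))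
        = (q - p) / (p + θ * (q - p)) := fun θ hθ => by
    have hre : 0 < (p + θ * (q - p)).re :=
      (lt_min hp hq).trans_le (min_re_le_re_add_mul_sub p q hθ.1.le hθ.2)
    have := integral_exp_mul_complex_Ioi (a := -(p + θ * (q - p))) (by rwa [neg_re, neg_lt_zero]) 0
    simp_rw [neg_mul] at this
    rw [integral_const_mul, this, ofReal_zero, mul_zero, neg_zero, exp_zero, neg_div_neg_eq,
      mul_one_div]
  calc ∫ k in Ioi (0:ℝ), (exp (-(p * k)) - exp (-(q * k))) / k
      = ∫ k in Ioi (0:ℝ), ∫ θ in Ioc (0:ℝ) 1, (q - p) * exp (-((p + θ * (q - p)) * k)) :=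
        setIntegral_congr_fun measurableSet_Ioi fun k hk => by
          rw [← intervalIntegral.integral_of_le zero_le_one,
            integral_mul_exp_neg_add_mul_sub p q (ne_of_gt hk)]
    _ = ∫ θ in Ioc (0:ℝ) 1, ∫ k in Ioi (0:ℝ), (q - p) * exp (-((p + θ * (q - p)) * k)) :=
        integral_integral_swap (integrable_mul_exp_neg_add_mul_sub hp hq)
    _ = ∫ θ in (0:ℝ)..1, (q - p) / (p + θ * (q - p)) := by
        rw [intervalIntegral.integral_of_le zero_le_one]
        exact setIntegral_congr_fun measurableSet_Ioc hlaplace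
    _ = log q - log p := integral_div_add_mul_sub hp hq

lemma log_add_log_conj {z : ℂ} (hz : z.arg ≠ π) :
    log z + log (starRingEnd ℂ z) = Real.log (normSq z) := by
  rw [log_conj z hz, add_conj, log_re, ← Complex.sq_norm, Real.log_pow]
  push_cast
  ring

end Complex

lemma integrable_exp_neg_mul_abs {m : ℝ} (hm : 0 < m) :
    Integrable fun k : ℝ => Real.exp (-(m * |k|)) := by
  rw [← integrableOn_univ, ← Iic_union_Ioi (a := 0)]
  refine IntegrableOn.union ?_ ?_
  · refine (integrableOn_exp_mul_Iic hm 0).congr_fun (fun k hk => ?_) measurableSet_Iic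
    rw [abs_of_nonpos hk, mul_neg, neg_neg]
  · refine (integrableOn_exp_mul_Ioi (neg_lt_zero.mpr hm) 0).congr_fun (fun k hk => ?_)
      measurableSet_Ioi
    simp only [abs_of_pos (mem_Ioi.mp hk), neg_mul]

def logPotentialKernel (a b u v k : ℝ) : ℂ :=
  ((1/|k| : ℝ) : ℂ) * (((Real.exp (-(|k| * a)) : ℝ) : ℂ) * Complex.exp (Complex.I * k * u)
    - ((Real.exp (-(|k| * b)) : ℝ) : ℂ) * Complex.exp (Complex.I * k * v))

namespace logPotentialKernel

lemma eq_of_pos (a b u v : ℝ) {k : ℝ} (hk : 0 < k) :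
    logPotentialKernel a b u v k = (Complex.exp (-((a - u * Complex.I) * k))
      - Complex.exp (-((b - v * Complex.I) * k))) / k := by
  simp only [logPotentialKernel, abs_of_pos hk, Complex.ofReal_exp, ← Complex.exp_add]
  push_cast
  ring_nf

lemma neg (a b u v k : ℝ) :
    logPotentialKernel a b u v (-k) = logPotentialKernel a b (-u) (-v) k := by
  simp only [logPotentialKernel, abs_neg]
  push_cast
  ring_nf

lemma norm_le (a b u v k : ℝ) :
    ‖logPotentialKernel a b u v k‖ ≤ (|b - a| + |u - v|) * Real.exp (-(min a b * |k|)) := by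
  have hpos : ∀ u v : ℝ, ∀ k > 0, ‖logPotentialKernel a b u v k‖
      ≤ (|b - a| + |u - v|) * Real.exp (-(min a b * |k|)) := fun u v k hk => by
    rw [eq_of_pos a b u v hk, abs_of_pos hk]
    refine (Complex.norm_exp_neg_sub_exp_neg_div_le _ _ hk).trans ?_
    have hnorm := Complex.norm_le_abs_re_add_abs_im ((b - v * Complex.I) - (a - u * Complex.I))
    simp only [Complex.sub_re, Complex.sub_im, Complex.ofReal_re, Complex.ofReal_im,
      Complex.re_ofReal_mul, Complex.im_ofReal_mul, Complex.I_re, Complex.I_im] at hnorm ⊢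
    simp only [mul_zero, mul_one, sub_zero, zero_sub, sub_neg_eq_add, neg_add_eq_sub] at hnorm ⊢
    gcongr
  rcases lt_trichotomy k 0 with hk | rfl | hk
  · simpa only [neg, neg_neg, abs_neg, neg_sub_neg, abs_sub_comm v u] using
      hpos (-u) (-v) (-k) (neg_pos.mpr hk)
  · simp only [logPotentialKernel, abs_zero, div_zero, Complex.ofReal_zero, zero_mul, norm_zero]
    positivity
  · exact hpos u v k hk

lemma integrable {a b : ℝ} (ha : 0 < a) (hb : 0 < b) (u v : ℝ) :
    Integrable (logPotentialKernel a b u v) := by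
  refine ((integrable_exp_neg_mul_abs (lt_min ha hb)).const_mul (|b - a| + |u - v|)).mono'
    ?_ (ae_of_all _ (norm_le a b u v))
  unfold logPotentialKernel
  fun_prop

lemma integral_Ioi {a b : ℝ} (ha : 0 < a) (hb : 0 < b) (u v : ℝ) :
    ∫ k in Ioi (0:ℝ), logPotentialKernel a b u v k
      = Complex.log (b - v * Complex.I) - Complex.log (a - u * Complex.I) := by
  rw [setIntegral_congr_fun measurableSet_Ioi fun k hk => eq_of_pos a b u v hk]
  exact Complex.integral_Ioi_exp_neg_sub_exp_neg_div (by simpa using ha) (by simpa using hb)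

theorem integral {a b : ℝ} (ha : 0 < a) (hb : 0 < b) (u v : ℝ) :
    ∫ k, logPotentialKernel a b u v k = Real.log (b ^ 2 + v ^ 2) - Real.log (a ^ 2 + u ^ 2) := by
  have hlog : ∀ c w : ℝ, 0 < c →
      Complex.log (c + w * Complex.I) + Complex.log (c - w * Complex.I)
        = Real.log (c ^ 2 + w ^ 2) := fun c w hc => by
    have harg : (c + w * Complex.I).arg ≠ π := by
      rw [Ne, Complex.arg_eq_pi_iff]
      simp [hc.not_gt]
    simpa [Complex.conj_ofReal, Complex.normSq_add_mul_I, sub_eq_add_neg] using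
      Complex.log_add_log_conj harg
  have hK := integrable ha hb u v
  rw [← intervalIntegral.integral_Iic_add_Ioi (b := 0) hK.integrableOn hK.integrableOn,
    ← neg_zero, ← integral_comp_neg_Ioi, neg_zero]
  simp_rw [neg]
  rw [integral_Ioi ha hb, integral_Ioi ha hb, ← hlog a u ha, ← hlog b v hb]
  simp only [Complex.ofReal_neg, neg_mul, sub_neg_eq_add]
  ring

lemma sub_neg_eq_mul_exp (a b y t k : ℝ) :
    logPotentialKernel a b (y - t) (-t) k
      = logPotentialKernel a b y 0 k * Complex.exp (-(Complex.I * k * t)) := by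
  simp only [logPotentialKernel, Complex.ofReal_sub, Complex.ofReal_neg, Complex.ofReal_zero,
    mul_sub, mul_neg, mul_zero, Complex.exp_sub, Complex.exp_neg, Complex.exp_zero, div_eq_mul_inv]
  ring

end logPotentialKernel

theorem integral_log_sub_log_mul_eq_neg_integral_logPotentialKernel_mul_fourierHat
    {a b : ℝ} (ha : 0 < a) (hb : 0 < b) (y : ℝ) {f : ℝ → ℂ} (hf : Integrable f) :
    Integrable (fun t : ℝ =>
      ((Real.log (a ^ 2 + (y - t) ^ 2) - Real.log (b ^ 2 + t ^ 2) : ℝ) : ℂ) * f t) ∧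
    Integrable (fun k : ℝ => logPotentialKernel a b y 0 k * fourierHat f k) ∧
    ∫ t : ℝ, ((Real.log (a ^ 2 + (y - t) ^ 2) - Real.log (b ^ 2 + t ^ 2) : ℝ) : ℂ) * f t
      = -∫ k : ℝ, logPotentialKernel a b y 0 k * fourierHat f k := by
  set F : ℝ → ℝ → ℂ := fun t k => logPotentialKernel a b (y - t) (-t) k * f t
  have hFint : Integrable (Function.uncurry F) (volume.prod volume) := by
    refine (hf.norm.mul_prod (logPotentialKernel.integrable ha hb y 0).norm).mono' ?_
      (ae_of_all _ fun z => ?_)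
    · refine AEStronglyMeasurable.mul ?_ hf.aestronglyMeasurable.comp_fst
      unfold logPotentialKernel
      fun_prop
    · simp only [Function.uncurry, F, logPotentialKernel.sub_neg_eq_mul_exp, norm_mul,
        Complex.norm_exp, Complex.neg_re, Complex.mul_re, Complex.I_re, Complex.I_im,
        Complex.ofReal_re, Complex.ofReal_im]
      simp [mul_comm]
  have hlog : ∀ t, ((Real.log (a ^ 2 + (y - t) ^ 2) - Real.log (b ^ 2 + t ^ 2) : ℝ) : ℂ) * f t
      = -∫ k, F t k := fun t => by
    rw [integral_mul_const, logPotentialKernel.integral ha hb, neg_sq]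
    push_cast
    ring
  have hfourier : ∀ k, ∫ t, F t k = logPotentialKernel a b y 0 k * fourierHat f k := fun k => by
    simp only [F, logPotentialKernel.sub_neg_eq_mul_exp, fourierHat, ← integral_const_mul]
    congr 1 with t
    ring
  refine ⟨?_, ?_, ?_⟩
  · simp_rw [hlog]
    exact hFint.integral_prod_left.neg
  · simp_rw [← hfourier]
    exact hFint.swap.integral_prod_left
  · simp_rw [hlog, ← hfourier]
    rw [integral_neg, integral_integral_swap hFint]

theorem singleLayer_crescent_fourier_representation_general
    (R r : ℝ) (hr : 0 < r) (hRr : r < R)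
    (fR fr : ℝ → ℂ)
    (hfR1 : Integrable fR)
    (hfr1 : Integrable fr)
    (x y : ℝ) (hx : x ∈ Ioo (1/(2*R)) (1/(2*r))) :
    Integrable (fun t : ℝ =>
      ((Real.log ((x - 1/(2*R))^2 + (y - t)^2) - Real.log ((1/(2*R))^2 + t^2) : ℝ) : ℂ)
        * fR t) ∧
    Integrable (fun t : ℝ =>
      ((Real.log ((x - 1/(2*r))^2 + (y - t)^2) - Real.log ((1/(2*r))^2 + t^2) : ℝ) : ℂ)
        * fr t) ∧
    Integrable (fun k : ℝ =>
      ((1/|k| : ℝ) : ℂ) *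
        (((Real.exp (-(|k| * (x - 1/(2*R)))) : ℝ) : ℂ) * Complex.exp (Complex.I * k * y)
            - ((Real.exp (-(|k| / (2*R))) : ℝ) : ℂ)) * fourierHat fR k
      + ((1/|k| : ℝ) : ℂ) *
        (((Real.exp (-(|k| * (1/(2*r) - x))) : ℝ) : ℂ) * Complex.exp (Complex.I * k * y)
            - ((Real.exp (-(|k| / (2*r))) : ℝ) : ℂ)) * fourierHat fr k) ∧
    ((1/(4*(π:ℂ))) * ∫ t : ℝ,
        ((Real.log ((x - 1/(2*R))^2 + (y - t)^2) - Real.log ((1/(2*R))^2 + t^2) : ℝ) : ℂ)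
          * fR t)
      + ((1/(4*(π:ℂ))) * ∫ t : ℝ,
        ((Real.log ((x - 1/(2*r))^2 + (y - t)^2) - Real.log ((1/(2*r))^2 + t^2) : ℝ) : ℂ)
          * fr t)
      = -(1/(4*(π:ℂ))) * ∫ k : ℝ,
          (((1/|k| : ℝ) : ℂ) *
            (((Real.exp (-(|k| * (x - 1/(2*R)))) : ℝ) : ℂ) * Complex.exp (Complex.I * k * y)
                - ((Real.exp (-(|k| / (2*R))) : ℝ) : ℂ)) * fourierHat fR k
          + ((1/|k| : ℝ) : ℂ) *
            (((Real.exp (-(|k| * (1/(2*r) - x))) : ℝ) : ℂ) * Complex.exp (Complex.I * k * y)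
                - ((Real.exp (-(|k| / (2*r))) : ℝ) : ℂ)) * fourierHat fr k) := by
  have hR : 0 < R := hr.trans hRr
  obtain ⟨hintR, hintR', heqR⟩ :=
    integral_log_sub_log_mul_eq_neg_integral_logPotentialKernel_mul_fourierHat
      (sub_pos.mpr hx.1) (by positivity : (0:ℝ) < 1/(2*R)) y hfR1
  obtain ⟨hintr, hintr', heqr⟩ :=
    integral_log_sub_log_mul_eq_neg_integral_logPotentialKernel_mul_fourierHat
      (sub_pos.mpr hx.2) (by positivity : (0:ℝ) < 1/(2*r)) y hfr1
  have hsq : ∀ t : ℝ, (1/(2*r) - x)^2 + (y - t)^2 = (x - 1/(2*r))^2 + (y - t)^2 := fun t => by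
    ring
  simp only [logPotentialKernel, Complex.ofReal_zero, mul_zero, Complex.exp_zero, mul_one,
    mul_one_div, hsq] at hintR hintR' heqR hintr hintr' heqr
  refine ⟨hintR, hintr, hintR'.add hintr', ?_⟩
  rw [heqR, heqr, integral_add hintR' hintr']
  ring

/-- Fourier representation of the single layer potential of the crescent
domain `Ω = B_R \ closure(B_r)` in strip coordinates: for mean-zero weighted densities
`f_R, f_r ∈ L¹ ∩ L²` and every point `(x,y)` of the strip `(1/(2R), 1/(2r)) × ℝ`, the
boundary-integral expression of `S_{∂Ω}[φ](Ψ(x,y))` equals its frequency-domain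
expression, all integrals being absolutely convergent. -/
theorem singleLayer_crescent_fourier_representation
    (R r : ℝ) (hr : 0 < r) (hRr : r < R)
    (fR fr : ℝ → ℂ)
    (hfR1 : Integrable fR) (hfR2 : MemLp fR 2 (volume : Measure ℝ))
    (hfr1 : Integrable fr) (hfr2 : MemLp fr 2 (volume : Measure ℝ))
    (hmean : (∫ t : ℝ, fR t) + (∫ t : ℝ, fr t) = 0)
    (x y : ℝ) (hx : x ∈ Ioo (1/(2*R)) (1/(2*r))) :
    Integrable (fun t : ℝ =>
      ((Real.log ((x - 1/(2*R))^2 + (y - t)^2) - Real.log ((1/(2*R))^2 + t^2) : ℝ) : ℂ)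
        * fR t) ∧
    Integrable (fun t : ℝ =>
      ((Real.log ((x - 1/(2*r))^2 + (y - t)^2) - Real.log ((1/(2*r))^2 + t^2) : ℝ) : ℂ)
        * fr t) ∧
    Integrable (fun k : ℝ =>
      ((1/|k| : ℝ) : ℂ) *
        (((Real.exp (-(|k| * (x - 1/(2*R)))) : ℝ) : ℂ) * Complex.exp (Complex.I * k * y)
            - ((Real.exp (-(|k| / (2*R))) : ℝ) : ℂ)) * fourierHat fR k
      + ((1/|k| : ℝ) : ℂ) *
        (((Real.exp (-(|k| * (1/(2*r) - x))) : ℝ) : ℂ) * Complex.exp (Complex.I * k * y)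
            - ((Real.exp (-(|k| / (2*r))) : ℝ) : ℂ)) * fourierHat fr k) ∧
    ((1/(4*(π:ℂ))) * ∫ t : ℝ,
        ((Real.log ((x - 1/(2*R))^2 + (y - t)^2) - Real.log ((1/(2*R))^2 + t^2) : ℝ) : ℂ)
          * fR t)
      + ((1/(4*(π:ℂ))) * ∫ t : ℝ,
        ((Real.log ((x - 1/(2*r))^2 + (y - t)^2) - Real.log ((1/(2*r))^2 + t^2) : ℝ) : ℂ)
          * fr t)
      = -(1/(4*(π:ℂ))) * ∫ k : ℝ,
          (((1/|k| : ℝ) : ℂ) *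
            (((Real.exp (-(|k| * (x - 1/(2*R)))) : ℝ) : ℂ) * Complex.exp (Complex.I * k * y)
                - ((Real.exp (-(|k| / (2*R))) : ℝ) : ℂ)) * fourierHat fR k
          + ((1/|k| : ℝ) : ℂ) *
            (((Real.exp (-(|k| * (1/(2*r) - x))) : ℝ) : ℂ) * Complex.exp (Complex.I * k * y)
                - ((Real.exp (-(|k| / (2*r))) : ℝ) : ℂ)) * fourierHat fr k) :=
  singleLayer_crescent_fourier_representation_general R r hr hRr fR fr hfR1 hfr1 x y hx
end
end

section
/- Let f : ℝ → ℂ be measurable with C₀ := ∫_ℝ |f(k)|²/|k| dk < ∞. Then f is locally integrable and for every Schwartz function ψ : ℝ → ℂ one has |∫_ℝ f(k) ψ(k) dk| ≤ √C₀ · sup_{k ∈ ℝ} (1 + k²)|ψ(k)|. In particular, every such f defines a tempered distribution on ℝ. -/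
/-!
Cauchy–Schwarz with weight `|k|` bounds `∫ |f ψ|` by `√(∫ |f|²/|k|) · √(∫ |k| |ψ|²)`.
If `(1 + k²)|ψ(k)| ≤ M` then `|k| |ψ(k)|² ≤ M² |k|/(1 + k²)²`, and `∫ |k|/(1 + k²)² = 1`,
so the second factor is at most `M`. Local integrability comes from the same splitting
with `ψ = 1`, i.e. from `|f| ≤ |f|²/|k| + |k|`.
-/

open MeasureTheory Set Filter Topology

section WeightedCauchySchwarz

variable {α : Type*} [MeasurableSpace α] {μ : Measure α}

theorem integral_mul_le_sqrt_mul_sqrt {f g : α → ℝ} (hf0 : 0 ≤ᵐ[μ] f)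
    (hg0 : 0 ≤ᵐ[μ] g) (hf : MemLp f 2 μ) (hg : MemLp g 2 μ) :
    ∫ x, f x * g x ∂μ ≤ √(∫ x, f x ^ 2 ∂μ) * √(∫ x, g x ^ 2 ∂μ) := by
  have h := integral_mul_le_Lp_mul_Lq_of_nonneg Real.HolderConjugate.two_two hf0 hg0
    (by simpa using hf) (by simpa using hg)
  simpa [Real.sqrt_eq_rpow, Real.rpow_two] using h

theorem abs_mul_le_sq_div_add_mul_sq {u v w : ℝ} (hw : 0 < w) :
    |u * v| ≤ u ^ 2 / w + w * v ^ 2 := by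
  rw [abs_mul, ← sq_abs u, ← sq_abs v, div_add' _ _ _ hw.ne', le_div_iff₀ hw]
  nlinarith [sq_nonneg (|u| - w * |v|), abs_nonneg u, abs_nonneg v]

theorem integrable_mul_of_weight {u v w : α → ℝ} (hw0 : ∀ᵐ x ∂μ, 0 < w x)
    (huv : AEStronglyMeasurable (fun x => u x * v x) μ)
    (hu2 : Integrable (fun x => u x ^ 2 / w x) μ)
    (hv2 : Integrable (fun x => w x * v x ^ 2) μ) :
    Integrable (fun x => u x * v x) μ :=
  (hu2.add hv2).mono' huv <| by
    filter_upwards [hw0] with x hx using abs_mul_le_sq_div_add_mul_sq hx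

theorem integral_mul_le_sqrt_mul_sqrt_of_weight {u v w : α → ℝ} (hu0 : 0 ≤ᵐ[μ] u)
    (hv0 : 0 ≤ᵐ[μ] v) (hw0 : ∀ᵐ x ∂μ, 0 < w x) (hu : AEStronglyMeasurable u μ)
    (hv : AEStronglyMeasurable v μ) (hw : AEStronglyMeasurable w μ)
    (hu2 : Integrable (fun x => u x ^ 2 / w x) μ)
    (hv2 : Integrable (fun x => w x * v x ^ 2) μ) :
    ∫ x, u x * v x ∂μ ≤ √(∫ x, u x ^ 2 / w x ∂μ) * √(∫ x, w x * v x ^ 2 ∂μ) := by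
  set f : α → ℝ := fun x => u x / √(w x)
  set g : α → ℝ := fun x => √(w x) * v x
  have hf2 : (fun x => f x ^ 2) =ᵐ[μ] fun x => u x ^ 2 / w x := by
    filter_upwards [hw0] with x hx
    simp only [f, div_pow, Real.sq_sqrt hx.le]
  have hg2 : (fun x => g x ^ 2) =ᵐ[μ] fun x => w x * v x ^ 2 := by
    filter_upwards [hw0] with x hx
    simp only [g, mul_pow, Real.sq_sqrt hx.le]
  have hfg : (fun x => f x * g x) =ᵐ[μ] fun x => u x * v x := by
    filter_upwards [hw0] with x hx
    have : √(w x) ≠ 0 := (Real.sqrt_pos.2 hx).ne'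
    simp only [f, g]
    field_simp
  have hsqrt := Real.continuous_sqrt.comp_aestronglyMeasurable hw
  have hf : MemLp f 2 μ := (memLp_two_iff_integrable_sq (hu.div₀ hsqrt)).2 (hu2.congr hf2.symm)
  have hg : MemLp g 2 μ := (memLp_two_iff_integrable_sq (hsqrt.mul hv)).2 (hv2.congr hg2.symm)
  have hf0 : 0 ≤ᵐ[μ] f := by
    filter_upwards [hu0] with x hx using div_nonneg hx (Real.sqrt_nonneg _)
  have hg0 : 0 ≤ᵐ[μ] g := by
    filter_upwards [hv0] with x hx using mul_nonneg (Real.sqrt_nonneg _) hx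
  calc ∫ x, u x * v x ∂μ = ∫ x, f x * g x ∂μ := (integral_congr_ae hfg).symm
    _ ≤ √(∫ x, f x ^ 2 ∂μ) * √(∫ x, g x ^ 2 ∂μ) :=
      integral_mul_le_sqrt_mul_sqrt hf0 hg0 hf hg
    _ = _ := by rw [integral_congr_ae hf2, integral_congr_ae hg2]

end WeightedCauchySchwarz

theorem ae_zero_lt_abs : ∀ᵐ k : ℝ, 0 < |k| := by
  have : ∀ᵐ k : ℝ, k ≠ 0 := by simp [ae_iff, measure_singleton]
  filter_upwards [this] with k hk using abs_pos.2 hk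

theorem locallyIntegrable_of_integrable_sq_div_abs {E : Type*} [NormedAddCommGroup E]
    {f : ℝ → E} (hmeas : AEStronglyMeasurable f volume)
    (hf : Integrable (fun k : ℝ => ‖f k‖ ^ 2 / |k|)) : LocallyIntegrable f volume := by
  refine locallyIntegrable_iff.2 fun K hK => ?_
  have h := integrable_mul_of_weight (μ := volume.restrict K) (u := fun k => ‖f k‖)
    (v := fun _ => 1) (ae_restrict_of_ae ae_zero_lt_abs) (by simpa using hmeas.norm.restrict)
    hf.integrableOn
    (by simpa [IntegrableOn] using continuous_abs.continuousOn.integrableOn_compact hK)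
  simp only [mul_one] at h
  exact (integrable_norm_iff hmeas.restrict).1 h

theorem integrable_abs_div_one_add_sq_sq : Integrable fun k : ℝ => |k| / (1 + k ^ 2) ^ 2 := by
  refine integrable_inv_one_add_sq.mono'
    (continuous_abs.div (by fun_prop) fun k => by positivity).aestronglyMeasurable
    (Eventually.of_forall fun k => ?_)
  rw [Real.norm_of_nonneg (by positivity)]
  calc |k| / (1 + k ^ 2) ^ 2 ≤ (1 + k ^ 2) / (1 + k ^ 2) ^ 2 := by
        gcongr
        nlinarith [sq_abs k, sq_nonneg (|k| - 1)]
    _ = (1 + k ^ 2)⁻¹ := by field_simp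

theorem integral_Ioi_div_one_add_sq_sq : ∫ t in Ioi (0 : ℝ), t / (1 + t ^ 2) ^ 2 = 1 / 2 := by
  have hderiv : ∀ t ∈ Ici (0 : ℝ),
      HasDerivAt (fun t : ℝ => -(2 * (1 + t ^ 2))⁻¹) (t / (1 + t ^ 2) ^ 2) t := by
    intro t _
    have h : HasDerivAt (fun t : ℝ => 2 * (1 + t ^ 2)) (2 * (2 * t)) t := by
      simpa using ((hasDerivAt_pow 2 t).const_add 1).const_mul 2
    refine (h.inv (by positivity)).neg.congr_deriv ?_
    field_simp
  have hint : IntegrableOn (fun t : ℝ => t / (1 + t ^ 2) ^ 2) (Ioi 0) :=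
    integrable_abs_div_one_add_sq_sq.integrableOn.congr_fun
      (fun t ht => by simp only [abs_of_pos (mem_Ioi.1 ht)]) measurableSet_Ioi
  have htend : Tendsto (fun t : ℝ => -(2 * (1 + t ^ 2))⁻¹) atTop (𝓝 0) := by
    have h : Tendsto (fun t : ℝ => 2 * (1 + t ^ 2)) atTop atTop :=
      (tendsto_atTop_add_const_left _ 1
        (tendsto_pow_atTop two_ne_zero)).const_mul_atTop two_pos
    simpa using h.inv_tendsto_atTop.neg
  rw [integral_Ioi_of_hasDerivAt_of_tendsto' hderiv hint htend]
  norm_num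

theorem integral_abs_div_one_add_sq_sq : ∫ k : ℝ, |k| / (1 + k ^ 2) ^ 2 = 1 := by
  have h := integral_comp_abs (f := fun t : ℝ => t / (1 + t ^ 2) ^ 2)
  simp only [sq_abs] at h
  rw [h, integral_Ioi_div_one_add_sq_sq]
  norm_num

theorem SchwartzMap.bddAbove_one_add_norm_sq_mul_norm {E F : Type*} [NormedAddCommGroup E]
    [NormedSpace ℝ E] [NormedAddCommGroup F] [NormedSpace ℝ F] (ψ : SchwartzMap E F) :
    BddAbove (range fun x => (1 + ‖x‖ ^ 2) * ‖ψ x‖) := by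
  obtain ⟨C₀, -, hC₀⟩ := ψ.decay 0 0
  obtain ⟨C₂, -, hC₂⟩ := ψ.decay 2 0
  simp only [pow_zero, one_mul, norm_iteratedFDeriv_zero] at hC₀ hC₂
  refine ⟨C₀ + C₂, forall_mem_range.2 fun x => ?_⟩
  linarith [hC₀ x, hC₂ x]

theorem norm_integral_mul_le_sqrt_mul_iSup {𝕜 : Type*} [RCLike 𝕜] {f ψ : ℝ → 𝕜}
    (hf_meas : AEStronglyMeasurable f volume) (hψ_meas : AEStronglyMeasurable ψ volume)
    (hf : Integrable fun k : ℝ => ‖f k‖ ^ 2 / |k|)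
    (hψ : BddAbove (range fun k : ℝ => (1 + k ^ 2) * ‖ψ k‖)) :
    ‖∫ k : ℝ, f k * ψ k‖ ≤
      √(∫ k : ℝ, ‖f k‖ ^ 2 / |k|) * ⨆ k : ℝ, (1 + k ^ 2) * ‖ψ k‖ := by
  set M := ⨆ k : ℝ, (1 + k ^ 2) * ‖ψ k‖
  have hle (k : ℝ) : (1 + k ^ 2) * ‖ψ k‖ ≤ M := le_ciSup hψ k
  have hM0 : 0 ≤ M := (by positivity : (0 : ℝ) ≤ (1 + 0 ^ 2) * ‖ψ 0‖).trans (hle 0)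
  have hψ_sq (k : ℝ) : |k| * ‖ψ k‖ ^ 2 ≤ M ^ 2 * (|k| / (1 + k ^ 2) ^ 2) := by
    have hψk : ‖ψ k‖ ≤ M / (1 + k ^ 2) := by
      rw [le_div_iff₀ (by positivity), mul_comm]
      exact hle k
    calc |k| * ‖ψ k‖ ^ 2 ≤ |k| * (M / (1 + k ^ 2)) ^ 2 := by gcongr
      _ = M ^ 2 * (|k| / (1 + k ^ 2) ^ 2) := by rw [div_pow]; ring
  have hweight := integrable_abs_div_one_add_sq_sq.const_mul (M ^ 2)
  have hψ_int : Integrable fun k : ℝ => |k| * ‖ψ k‖ ^ 2 :=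
    hweight.mono' (continuous_abs.aestronglyMeasurable.mul (hψ_meas.norm.pow 2))
      (Eventually.of_forall fun k => by
        rw [Real.norm_of_nonneg (by positivity)]
        exact hψ_sq k)
  calc ‖∫ k : ℝ, f k * ψ k‖ ≤ ∫ k : ℝ, ‖f k‖ * ‖ψ k‖ := by
        simpa only [norm_mul] using norm_integral_le_integral_norm fun k => f k * ψ k
    _ ≤ √(∫ k : ℝ, ‖f k‖ ^ 2 / |k|) * √(∫ k : ℝ, |k| * ‖ψ k‖ ^ 2) :=
        integral_mul_le_sqrt_mul_sqrt_of_weight (ae_of_all _ fun _ => norm_nonneg _)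
          (ae_of_all _ fun _ => norm_nonneg _) ae_zero_lt_abs hf_meas.norm
          hψ_meas.norm continuous_abs.aestronglyMeasurable hf hψ_int
    _ ≤ √(∫ k : ℝ, ‖f k‖ ^ 2 / |k|) * √(∫ k : ℝ, M ^ 2 * (|k| / (1 + k ^ 2) ^ 2)) := by
        gcongr
        exact hψ_sq
    _ = √(∫ k : ℝ, ‖f k‖ ^ 2 / |k|) * M := by
        rw [integral_const_mul, integral_abs_div_one_add_sq_sq, mul_one, Real.sqrt_sq hM0]

/-- The embedding of the space `K₀^{-1/2}` into tempered distributions: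
if `f` is measurable with `C₀ = ∫ |f(k)|²/|k| dk < ∞`, then `f` is locally integrable and
for every Schwartz function `ψ`,
`|∫ f ψ| ≤ √C₀ · sup_k (1 + k²)|ψ(k)|`; in particular `f` defines a tempered
distribution on `ℝ`. -/
theorem sqInv_weight_integrable_defines_tempered_distribution
    (f : ℝ → ℂ) (hmeas : Measurable f)
    (hf : Integrable (fun k : ℝ => ‖f k‖ ^ 2 / |k|)) :
    LocallyIntegrable f volume ∧
    ∀ ψ : SchwartzMap ℝ ℂ,
      ‖∫ k : ℝ, f k * ψ k‖ ≤
        Real.sqrt (∫ k : ℝ, ‖f k‖ ^ 2 / |k|) * ⨆ k : ℝ, (1 + k ^ 2) * ‖ψ k‖ :=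
  ⟨locallyIntegrable_of_integrable_sq_div_abs hmeas.aestronglyMeasurable hf, fun ψ =>
    norm_integral_mul_le_sqrt_mul_iSup hmeas.aestronglyMeasurable
      ψ.continuous.aestronglyMeasurable hf (by simpa using ψ.bddAbove_one_add_norm_sq_mul_norm)⟩
end

section
/- Let R, r > 0. Let f_R, f_{-r} ∈ L¹(ℝ;ℂ) ∩ L²(ℝ;ℂ) with ∫_ℝ f_R + ∫_ℝ f_{-r} = 0. Then for every x ∈ ℝ with x > 1/(2R) or x < -1/(2r), and every y ∈ ℝ, (1/(4π)) ∫_ℝ [ ln((x - 1/(2R))² + (y-t)²) - ln((1/(2R))² + t²) ] f_R(t) dt + (1/(4π)) ∫_ℝ [ ln((x + 1/(2r))² + (y-t)²) - ln((1/(2r))² + t²) ] f_{-r}(t) dt = -(1/(4π)) ∫_ℝ (1/|k|) [ (e^{-|k|·|x - 1/(2R)|} e^{iky} - e^{-|k|/(2R)}) f̂_R(k) + (e^{-|k|·|x + 1/(2r)|} e^{iky} - e^{-|k|/(2r)}) f̂_{-r}(k) ] dk, where both sides are absolutely convergent integrals. -/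
/-!
For `a, c > 0` the kernel `K(k) = (e^{-a|k|} e^{ikb} - e^{-c|k|} e^{ikd}) / |k|` is integrable with
`∫ K = log (c² + d²) - log (a² + b²)`. On `k > 0` this is the complex Frullani integral
`∫₀^∞ (e^{-zk} - e^{-wk}) / k dk = log w - log z` with `z = a - ib`, `w = c - id`, obtained by
writing the integrand as `∫₀¹ (w - z) e^{-(z + u(w - z))k} du` and exchanging the integrals;
`k < 0` contributes the complex conjugate, so the two halves add up to `2 Re (log w - log z)`.
Writing `K_{b,d}` for this kernel, `K_{y-t,-t}(k) = K_{y,0}(k) e^{-ikt}`, so each logarithmic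
difference in the single layer potential is `-∫ K_{y,0}(k) e^{-ikt} dk`; Fubini against the
integrable density then turns the `t`-integral into its Fourier transform.
-/

open MeasureTheory Set Real

noncomputable section

open Filter
open scoped Complex

section ComplexFrullani

variable {z w : ℂ} {m : ℝ}

lemma le_re_add_mul_sub (hz : m ≤ z.re) (hw : m ≤ w.re) {u : ℝ} (hu : u ∈ Icc (0 : ℝ) 1) :
    m ≤ (z + u * (w - z)).re := by
  simp only [Complex.add_re, Complex.re_ofReal_mul, Complex.sub_re]
  nlinarith [hu.1, hu.2]

lemma norm_cexp_neg_mul_le {ζ : ℂ} (hζ : m ≤ ζ.re) {k : ℝ} (hk : 0 ≤ k) :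
    ‖cexp (-ζ * k)‖ ≤ rexp (-(m * k)) := by
  rw [Complex.norm_exp, exp_le_exp]
  simp only [Complex.mul_re, Complex.neg_re, Complex.ofReal_re, Complex.neg_im,
    Complex.ofReal_im, mul_zero, sub_zero]
  nlinarith

lemma exp_sub_exp_div_eq_integral (z w : ℂ) {k : ℝ} (hk : k ≠ 0) :
    (cexp (-z * k) - cexp (-w * k)) / k
      = ∫ u in (0 : ℝ)..1, (w - z) * cexp (-(z + u * (w - z)) * k) := by
  have hk' : (k : ℂ) ≠ 0 := Complex.ofReal_ne_zero.mpr hk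
  have hderiv (u : ℝ) : HasDerivAt (fun u : ℝ => -(cexp (-(z + u * (w - z)) * k) / k))
      ((w - z) * cexp (-(z + u * (w - z)) * k)) u := by
    have hlin : HasDerivAt (fun u : ℝ => -(z + u * (w - z)) * k) (-(w - z) * k) u := by
      simpa using (((Complex.ofRealCLM.hasDerivAt (x := u)).mul_const (w - z)).const_add z
        |>.neg.mul_const (k : ℂ))
    refine (hlin.cexp.div_const (k : ℂ)).neg.congr_deriv ?_
    field_simp
  rw [intervalIntegral.integral_eq_sub_of_hasDerivAt (fun u _ => hderiv u)
    ((Continuous.intervalIntegrable (by fun_prop)) _ _)]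
  simp only [Complex.ofReal_one, Complex.ofReal_zero, one_mul, zero_mul, add_zero,
    add_sub_cancel]
  ring

lemma norm_exp_sub_exp_div_le (hz : m ≤ z.re) (hw : m ≤ w.re) {k : ℝ} (hk : 0 < k) :
    ‖(cexp (-z * k) - cexp (-w * k)) / k‖ ≤ ‖w - z‖ * rexp (-(m * k)) := by
  rw [exp_sub_exp_div_eq_integral z w hk.ne']
  refine (intervalIntegral.norm_integral_le_of_norm_le_const
    (C := ‖w - z‖ * rexp (-(m * k))) fun u hu => ?_).trans_eq (by simp)
  rw [uIoc_of_le zero_le_one] at hu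
  rw [norm_mul]
  exact mul_le_mul_of_nonneg_left
    (norm_cexp_neg_mul_le (le_re_add_mul_sub hz hw (Ioc_subset_Icc_self hu)) hk.le)
    (norm_nonneg _)

lemma integrableOn_exp_neg_mul_Ioi (hm : 0 < m) :
    IntegrableOn (fun k : ℝ => rexp (-(m * k))) (Ioi 0) := by
  simpa only [neg_mul] using integrableOn_exp_mul_Ioi (neg_neg_of_pos hm) 0

lemma integrableOn_exp_sub_exp_div_Ioi (hz : 0 < z.re) (hw : 0 < w.re) :
    IntegrableOn (fun k : ℝ => (cexp (-z * k) - cexp (-w * k)) / k) (Ioi 0) := by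
  refine Integrable.mono' ((integrableOn_exp_neg_mul_Ioi (lt_min hz hw)).const_mul ‖w - z‖)
    (Measurable.aestronglyMeasurable (by fun_prop)) ?_
  filter_upwards [ae_restrict_mem measurableSet_Ioi] with k hk
  exact norm_exp_sub_exp_div_le (min_le_left _ _) (min_le_right _ _) hk

lemma integral_sub_div_add_mul_sub (hz : 0 < z.re) (hw : 0 < w.re) :
    ∫ u in (0 : ℝ)..1, (w - z) / (z + u * (w - z)) = Complex.log w - Complex.log z := by
  have hpos {u : ℝ} (hu : u ∈ uIcc (0 : ℝ) 1) : 0 < (z + u * (w - z)).re := by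
    rw [uIcc_of_le zero_le_one] at hu
    exact (lt_min hz hw).trans_le (le_re_add_mul_sub (min_le_left _ _) (min_le_right _ _) hu)
  have hderiv (u : ℝ) (hu : u ∈ uIcc (0 : ℝ) 1) :
      HasDerivAt (fun u : ℝ => Complex.log (z + u * (w - z)))
        ((w - z) / (z + u * (w - z))) u := by
    have hlin : HasDerivAt (fun u : ℝ => z + u * (w - z)) (w - z) u := by
      simpa using ((Complex.ofRealCLM.hasDerivAt (x := u)).mul_const (w - z)).const_add z
    exact hlin.clog_real (Or.inl (hpos hu))
  have hcont : ContinuousOn (fun u : ℝ => (w - z) / (z + u * (w - z))) (uIcc 0 1) :=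
    continuousOn_const.div (by fun_prop) fun u hu h => by simpa [h] using hpos hu
  rw [intervalIntegral.integral_eq_sub_of_hasDerivAt hderiv hcont.intervalIntegrable]
  simp

theorem integral_exp_sub_exp_div_Ioi (hz : 0 < z.re) (hw : 0 < w.re) :
    ∫ k in Ioi (0 : ℝ), (cexp (-z * k) - cexp (-w * k)) / k
      = Complex.log w - Complex.log z := by
  set P : ℝ → ℝ → ℂ := fun k u => (w - z) * cexp (-(z + u * (w - z)) * k)
  have hm : 0 < min z.re w.re := lt_min hz hw
  have hP : Integrable (Function.uncurry P)
      ((volume.restrict (Ioi 0)).prod (volume.restrict (Ioc 0 1))) := by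
    refine Integrable.mono'
      (((integrableOn_exp_neg_mul_Ioi hm).const_mul ‖w - z‖).mul_prod
        (integrableOn_const (C := (1 : ℝ)) measure_Ioc_lt_top.ne))
      (Continuous.aestronglyMeasurable (by fun_prop)) ?_
    rw [Measure.prod_restrict]
    filter_upwards [ae_restrict_mem (measurableSet_Ioi.prod measurableSet_Ioc)]
      with ⟨k, u⟩ ⟨hk, hu⟩
    simp only [Function.uncurry_apply_pair, P, norm_mul, mul_one]
    exact mul_le_mul_of_nonneg_left (norm_cexp_neg_mul_le
      (le_re_add_mul_sub (min_le_left _ _) (min_le_right _ _) (Ioc_subset_Icc_self hu))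
      (le_of_lt hk)) (norm_nonneg _)
  calc ∫ k in Ioi (0 : ℝ), (cexp (-z * k) - cexp (-w * k)) / k
      = ∫ k in Ioi (0 : ℝ), ∫ u in Ioc (0 : ℝ) 1, P k u :=
        setIntegral_congr_fun measurableSet_Ioi fun k hk => by
          rw [exp_sub_exp_div_eq_integral z w (ne_of_gt hk),
            intervalIntegral.integral_of_le zero_le_one]
    _ = ∫ u in Ioc (0 : ℝ) 1, ∫ k in Ioi (0 : ℝ), P k u := integral_integral_swap hP
    _ = ∫ u in Ioc (0 : ℝ) 1, (w - z) / (z + u * (w - z)) :=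
        setIntegral_congr_fun measurableSet_Ioc fun u hu => by
          have hre : (-(z + u * (w - z))).re < 0 := by
            rw [Complex.neg_re, neg_lt_zero]
            exact lt_of_lt_of_le hm
              (le_re_add_mul_sub (min_le_left _ _) (min_le_right _ _) (Ioc_subset_Icc_self hu))
          simp only [P]
          rw [integral_const_mul, integral_exp_mul_complex_Ioi hre, Complex.ofReal_zero,
            mul_zero, Complex.exp_zero, neg_div_neg_eq, mul_one_div]
    _ = Complex.log w - Complex.log z := by
        rw [← intervalIntegral.integral_of_le zero_le_one, integral_sub_div_add_mul_sub hz hw]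

end ComplexFrullani

lemma Complex.log_sub_mul_I_add_log_add_mul_I {a : ℝ} (ha : 0 < a) (b : ℝ) :
    Complex.log (a - b * Complex.I) + Complex.log (a + b * Complex.I)
      = (Real.log (a ^ 2 + b ^ 2) : ℂ) := by
  set z : ℂ := a - b * Complex.I
  have hconj : (a + b * Complex.I : ℂ) = (starRingEnd ℂ) z := by simp [z]
  have harg : z.arg ≠ π := fun h => by
    simpa [z] using (Complex.arg_eq_pi_iff.mp h).1.trans ha
  have hnorm : ‖z‖ ^ 2 = a ^ 2 + b ^ 2 := by
    rw [Complex.sq_norm, Complex.normSq_apply]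
    simp [z]
    ring
  rw [hconj, Complex.log_conj z harg, Complex.add_conj, Complex.log_re, ← hnorm,
    Real.log_pow]
  push_cast
  ring

-- At `k = 0` the junk value `1 / |0| = 0` is harmless: it is a null set.
def frullaniKernel (a b c d k : ℝ) : ℂ :=
  ((1 / |k| : ℝ) : ℂ) * (((rexp (-(|k| * a)) : ℝ) : ℂ) * cexp (Complex.I * k * b)
    - ((rexp (-(|k| * c)) : ℝ) : ℂ) * cexp (Complex.I * k * d))

section FrullaniKernel

variable {a c : ℝ} (b d : ℝ)

lemma frullaniKernel_of_pos {k : ℝ} (hk : 0 < k) :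
    frullaniKernel a b c d k
      = (cexp (-(a - b * Complex.I) * k) - cexp (-(c - d * Complex.I) * k)) / k := by
  have hexp (a b : ℝ) :
      ((rexp (-(k * a)) : ℝ) : ℂ) * cexp (Complex.I * k * b)
        = cexp (-(a - b * Complex.I) * k) := by
    rw [Complex.ofReal_exp, ← Complex.exp_add]
    push_cast
    ring_nf
  rw [frullaniKernel, abs_of_pos hk, hexp, hexp]
  push_cast
  ring

lemma frullaniKernel_neg (k : ℝ) :
    frullaniKernel a b c d (-k) = frullaniKernel a (-b) c (-d) k := by
  simp only [frullaniKernel, abs_neg, Complex.ofReal_neg, neg_mul, mul_neg]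

lemma frullaniKernel_sub (k t : ℝ) :
    frullaniKernel a (b - t) c (d - t) k
      = frullaniKernel a b c d k * cexp (-(Complex.I * k * t)) := by
  simp only [frullaniKernel, Complex.ofReal_sub, mul_sub, Complex.exp_sub, div_eq_mul_inv,
    Complex.exp_neg]
  ring

lemma integrableOn_frullaniKernel_Ioi (ha : 0 < a) (hc : 0 < c) :
    IntegrableOn (frullaniKernel a b c d) (Ioi 0) :=
  (integrableOn_exp_sub_exp_div_Ioi (by simpa using ha) (by simpa using hc)).congr_fun
    (fun _ hk => (frullaniKernel_of_pos b d hk).symm) measurableSet_Ioi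

lemma integral_frullaniKernel_Ioi (ha : 0 < a) (hc : 0 < c) :
    ∫ k in Ioi (0 : ℝ), frullaniKernel a b c d k
      = Complex.log (c - d * Complex.I) - Complex.log (a - b * Complex.I) := by
  rw [setIntegral_congr_fun measurableSet_Ioi fun _ hk => frullaniKernel_of_pos b d hk]
  exact integral_exp_sub_exp_div_Ioi (by simpa using ha) (by simpa using hc)

theorem integrable_frullaniKernel (ha : 0 < a) (hc : 0 < c) :
    Integrable (frullaniKernel a b c d) := by
  have hIoi := integrableOn_frullaniKernel_Ioi (-b) (-d) ha hc
  rw [← neg_zero] at hIoi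
  have hreflect : (fun k => frullaniKernel a (-b) c (-d) (-k)) = frullaniKernel a b c d :=
    funext fun k => by rw [frullaniKernel_neg, neg_neg, neg_neg]
  have hIio : IntegrableOn (frullaniKernel a b c d) (Iio 0) := hreflect ▸ hIoi.comp_neg_Iio
  rw [← integrableOn_univ, ← Iic_union_Ioi (a := 0), integrableOn_union,
    integrableOn_Iic_iff_integrableOn_Iio]
  exact ⟨hIio, integrableOn_frullaniKernel_Ioi b d ha hc⟩

theorem integral_frullaniKernel (ha : 0 < a) (hc : 0 < c) :
    ∫ k, frullaniKernel a b c d k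
      = (Real.log (c ^ 2 + d ^ 2) - Real.log (a ^ 2 + b ^ 2) : ℝ) := by
  have hint := integrable_frullaniKernel b d ha hc
  have hIic : ∫ k in Iic (0 : ℝ), frullaniKernel a b c d k
      = Complex.log (c + d * Complex.I) - Complex.log (a + b * Complex.I) := by
    rw [← neg_zero, ← integral_comp_neg_Ioi]
    simp only [frullaniKernel_neg, integral_frullaniKernel_Ioi (-b) (-d) ha hc,
      Complex.ofReal_neg, neg_mul, sub_neg_eq_add]
  rw [← intervalIntegral.integral_Iic_add_Ioi hint.integrableOn hint.integrableOn, hIic,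
    integral_frullaniKernel_Ioi b d ha hc, Complex.ofReal_sub,
    ← Complex.log_sub_mul_I_add_log_add_mul_I ha, ← Complex.log_sub_mul_I_add_log_add_mul_I hc]
  ring

end FrullaniKernel

section LogPotential

variable {a c : ℝ} (y : ℝ) {f : ℝ → ℂ}

lemma ofReal_log_sub_log_eq_neg_integral (ha : 0 < a) (hc : 0 < c) (t : ℝ) :
    ((Real.log (a ^ 2 + (y - t) ^ 2) - Real.log (c ^ 2 + t ^ 2) : ℝ) : ℂ)
      = -∫ k, frullaniKernel a y c 0 k * cexp (-(Complex.I * k * t)) := by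
  simp_rw [← frullaniKernel_sub]
  rw [integral_frullaniKernel _ _ ha hc, zero_sub, neg_sq]
  push_cast
  ring

lemma integrable_frullaniKernel_mul_fourierIntegrand (ha : 0 < a) (hc : 0 < c)
    (hf : Integrable f) :
    Integrable (Function.uncurry fun k t : ℝ =>
      frullaniKernel a y c 0 k * (f t * cexp (-(Complex.I * k * t)))) (volume.prod volume) := by
  have hK : Measurable (frullaniKernel a y c 0) := by
    unfold frullaniKernel
    fun_prop
  refine Integrable.mono' ((integrable_frullaniKernel y 0 ha hc).norm.mul_prod hf.norm)
    ((hK.aestronglyMeasurable.comp_fst).mul ((hf.1.comp_snd).mul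
      (Continuous.aestronglyMeasurable (by fun_prop)))) ?_
  filter_upwards with ⟨k, t⟩
  simp [Complex.norm_exp]

theorem integral_logPotential_eq_neg_integral_fourierHat (ha : a ≠ 0) (hc : 0 < c)
    (hf : Integrable f) :
    Integrable (fun t => ((Real.log (a ^ 2 + (y - t) ^ 2) - Real.log (c ^ 2 + t ^ 2) : ℝ) : ℂ)
      * f t) ∧
    Integrable (fun k => frullaniKernel |a| y c 0 k * fourierHat f k) ∧
    ∫ t, ((Real.log (a ^ 2 + (y - t) ^ 2) - Real.log (c ^ 2 + t ^ 2) : ℝ) : ℂ) * f t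
      = -∫ k, frullaniKernel |a| y c 0 k * fourierHat f k := by
  have hF := integrable_frullaniKernel_mul_fourierIntegrand y (abs_pos.mpr ha) hc hf
  have hlog (t : ℝ) :
      ((Real.log (a ^ 2 + (y - t) ^ 2) - Real.log (c ^ 2 + t ^ 2) : ℝ) : ℂ) * f t
        = -∫ k, frullaniKernel |a| y c 0 k * (f t * cexp (-(Complex.I * k * t))) := by
    rw [← sq_abs a, ofReal_log_sub_log_eq_neg_integral y (abs_pos.mpr ha) hc, neg_mul,
      ← integral_mul_const]
    simp only [mul_assoc, mul_comm (f t)]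
  have hfourier (k : ℝ) :
      ∫ t, frullaniKernel |a| y c 0 k * (f t * cexp (-(Complex.I * k * t)))
        = frullaniKernel |a| y c 0 k * fourierHat f k :=
    integral_const_mul _ _
  refine ⟨?_, ?_, ?_⟩
  · exact hF.integral_prod_right.neg.congr (Eventually.of_forall fun t => (hlog t).symm)
  · simpa only [hfourier, Function.uncurry_apply_pair] using hF.integral_prod_left
  · simp_rw [hlog, integral_neg, ← integral_integral_swap hF, hfourier]

end LogPotential

theorem singleLayer_touchingDisks_fourier_representation_general
    (R r : ℝ) (hR : 0 < R) (hr : 0 < r)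
    (fR fmr : ℝ → ℂ)
    (hfR1 : Integrable fR)
    (hfmr1 : Integrable fmr)
    (x y : ℝ) (hx : 1/(2*R) < x ∨ x < -(1/(2*r))) :
    Integrable (fun t : ℝ =>
      ((Real.log ((x - 1/(2*R))^2 + (y - t)^2) - Real.log ((1/(2*R))^2 + t^2) : ℝ) : ℂ)
        * fR t) ∧
    Integrable (fun t : ℝ =>
      ((Real.log ((x + 1/(2*r))^2 + (y - t)^2) - Real.log ((1/(2*r))^2 + t^2) : ℝ) : ℂ)
        * fmr t) ∧
    Integrable (fun k : ℝ =>
      ((1/|k| : ℝ) : ℂ) *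
        (((Real.exp (-(|k| * |x - 1/(2*R)|)) : ℝ) : ℂ) * Complex.exp (Complex.I * k * y)
            - ((Real.exp (-(|k| / (2*R))) : ℝ) : ℂ)) * fourierHat fR k
      + ((1/|k| : ℝ) : ℂ) *
        (((Real.exp (-(|k| * |x + 1/(2*r)|)) : ℝ) : ℂ) * Complex.exp (Complex.I * k * y)
            - ((Real.exp (-(|k| / (2*r))) : ℝ) : ℂ)) * fourierHat fmr k) ∧
    ((1/(4*(π:ℂ))) * ∫ t : ℝ,
        ((Real.log ((x - 1/(2*R))^2 + (y - t)^2) - Real.log ((1/(2*R))^2 + t^2) : ℝ) : ℂ)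
          * fR t)
      + ((1/(4*(π:ℂ))) * ∫ t : ℝ,
        ((Real.log ((x + 1/(2*r))^2 + (y - t)^2) - Real.log ((1/(2*r))^2 + t^2) : ℝ) : ℂ)
          * fmr t)
      = -(1/(4*(π:ℂ))) * ∫ k : ℝ,
          (((1/|k| : ℝ) : ℂ) *
            (((Real.exp (-(|k| * |x - 1/(2*R)|)) : ℝ) : ℂ) * Complex.exp (Complex.I * k * y)
                - ((Real.exp (-(|k| / (2*R))) : ℝ) : ℂ)) * fourierHat fR k
          + ((1/|k| : ℝ) : ℂ) *
            (((Real.exp (-(|k| * |x + 1/(2*r)|)) : ℝ) : ℂ) * Complex.exp (Complex.I * k * y)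
                - ((Real.exp (-(|k| / (2*r))) : ℝ) : ℂ)) * fourierHat fmr k) := by
  have hR' : 0 < 1/(2*R) := by positivity
  have hr' : 0 < 1/(2*r) := by positivity
  have hxR : x - 1/(2*R) ≠ 0 := by rcases hx with h | h <;> intro h' <;> linarith
  have hxr : x + 1/(2*r) ≠ 0 := by rcases hx with h | h <;> intro h' <;> linarith
  have hkernel (s ρ : ℝ) (f : ℝ → ℂ) (k : ℝ) :
      ((1/|k| : ℝ) : ℂ) *
          (((Real.exp (-(|k| * |s|)) : ℝ) : ℂ) * Complex.exp (Complex.I * k * y)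
            - ((Real.exp (-(|k| / (2*ρ))) : ℝ) : ℂ)) * fourierHat f k
        = frullaniKernel |s| y (1/(2*ρ)) 0 k * fourierHat f k := by
    simp only [frullaniKernel, Complex.ofReal_zero, mul_zero, Complex.exp_zero, mul_one,
      mul_one_div]
  obtain ⟨hintR, hkerR, heqR⟩ :=
    integral_logPotential_eq_neg_integral_fourierHat y hxR hR' hfR1
  obtain ⟨hintr, hkerr, heqr⟩ :=
    integral_logPotential_eq_neg_integral_fourierHat y hxr hr' hfmr1
  simp only [hkernel]
  refine ⟨hintR, hintr, hkerR.add hkerr, ?_⟩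
  rw [heqR, heqr, integral_add hkerR hkerr]
  ring

/-- Fourier representation of the single layer potential of the
touching-disks domain `Ω = B_R ∪ B_{-r}` in half-plane coordinates: for mean-zero
weighted densities `f_R, f_{-r} ∈ L¹ ∩ L²` and every point `(x,y)` with `x > 1/(2R)` or
`x < -1/(2r)`, the boundary-integral expression of `S_{∂Ω}[φ](Ψ(x,y))` equals its
frequency-domain expression, all integrals being absolutely convergent. -/
theorem singleLayer_touchingDisks_fourier_representation
    (R r : ℝ) (hR : 0 < R) (hr : 0 < r)
    (fR fmr : ℝ → ℂ)
    (hfR1 : Integrable fR) (hfR2 : MemLp fR 2 (volume : Measure ℝ))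
    (hfmr1 : Integrable fmr) (hfmr2 : MemLp fmr 2 (volume : Measure ℝ))
    (hmean : (∫ t : ℝ, fR t) + (∫ t : ℝ, fmr t) = 0)
    (x y : ℝ) (hx : 1/(2*R) < x ∨ x < -(1/(2*r))) :
    Integrable (fun t : ℝ =>
      ((Real.log ((x - 1/(2*R))^2 + (y - t)^2) - Real.log ((1/(2*R))^2 + t^2) : ℝ) : ℂ)
        * fR t) ∧
    Integrable (fun t : ℝ =>
      ((Real.log ((x + 1/(2*r))^2 + (y - t)^2) - Real.log ((1/(2*r))^2 + t^2) : ℝ) : ℂ)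
        * fmr t) ∧
    Integrable (fun k : ℝ =>
      ((1/|k| : ℝ) : ℂ) *
        (((Real.exp (-(|k| * |x - 1/(2*R)|)) : ℝ) : ℂ) * Complex.exp (Complex.I * k * y)
            - ((Real.exp (-(|k| / (2*R))) : ℝ) : ℂ)) * fourierHat fR k
      + ((1/|k| : ℝ) : ℂ) *
        (((Real.exp (-(|k| * |x + 1/(2*r)|)) : ℝ) : ℂ) * Complex.exp (Complex.I * k * y)
            - ((Real.exp (-(|k| / (2*r))) : ℝ) : ℂ)) * fourierHat fmr k) ∧
    ((1/(4*(π:ℂ))) * ∫ t : ℝ,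
        ((Real.log ((x - 1/(2*R))^2 + (y - t)^2) - Real.log ((1/(2*R))^2 + t^2) : ℝ) : ℂ)
          * fR t)
      + ((1/(4*(π:ℂ))) * ∫ t : ℝ,
        ((Real.log ((x + 1/(2*r))^2 + (y - t)^2) - Real.log ((1/(2*r))^2 + t^2) : ℝ) : ℂ)
          * fmr t)
      = -(1/(4*(π:ℂ))) * ∫ k : ℝ,
          (((1/|k| : ℝ) : ℂ) *
            (((Real.exp (-(|k| * |x - 1/(2*R)|)) : ℝ) : ℂ) * Complex.exp (Complex.I * k * y)
                - ((Real.exp (-(|k| / (2*R))) : ℝ) : ℂ)) * fourierHat fR k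
          + ((1/|k| : ℝ) : ℂ) *
            (((Real.exp (-(|k| * |x + 1/(2*r)|)) : ℝ) : ℂ) * Complex.exp (Complex.I * k * y)
                - ((Real.exp (-(|k| / (2*r))) : ℝ) : ℂ)) * fourierHat fmr k) :=
  singleLayer_touchingDisks_fourier_representation_general R r hR hr fR fmr hfR1 hfmr1 x y hx
end
end
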